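/- arXiv:1112.2303 — 3 statements merged into one kernel-verified Lean document; each statement's English description precedes it below -/
import Mathlib

section
/- In the ring of formal power series ℚ[[q]], the identity ∑_{n=1}^∞ q^{n²} · (q^{n+1};q)_∞ · ((q;q)_{n−1})^{−1} · (1+q^n)^{−1} = ∑_{n=1}^∞ (−1)^{n−1} q^{n(n+1)/2} · (∏_{j=1}^{n} (1+q^j))^{−1} holds. -/
open PowerSeries

/-- The coefficientwise sum of a family of formal power series; it agrees with
the sum of the family whenever `coeff N (f n) = 0` for `n > N` (so that the
partial sums converge coefficientwise in the `q`-adic topology). -/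
noncomputable def seriesSum {R : Type*} [CommRing R] (f : ℕ → PowerSeries R) : PowerSeries R :=
  PowerSeries.mk fun N => ∑ n ∈ Finset.range (N + 1), PowerSeries.coeff (R := R) N (f n)

/-- The coefficientwise infinite product of a family of formal power series;
it agrees with the product of the family whenever each factor `f k` is
`1 + (terms of order > k)` (so that the partial products converge
coefficientwise in the `q`-adic topology). -/
noncomputable def seriesProd {R : Type*} [CommRing R] (f : ℕ → PowerSeries R) : PowerSeries R :=
  PowerSeries.mk fun N => PowerSeries.coeff (R := R) N (∏ k ∈ Finset.range (N + 1), f k)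

/-!
For `k ≥ 0` put
`Z_k = ∑_{m ≥ 0} q^{(m+1)² + k(m+1)} (q^{m+k+2};q)_∞ / ((q;q)_m (1 + q^{m+1}))` and
`W_k = ∑_{m ≥ 0} (-1)^m q^{(m+1)(m+2)/2 + k(m+1)} / (-q;q)_{m+1}`,
so that the two sides of the identity are `Z_0` and `W_0`. Both families satisfy
`S_k + (1 + q^{k+1}) S_{k+1} = q^{k+1}` and `S_k = O(q^{k+1})`; hence `D_k = Z_k - W_k` satisfies
`D_0 = (-1)^k (-q;q)_k D_k = O(q^{k+1})` for every `k`, and `D_0 = 0`.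

For `W` the recursion is a telescoping sum. For `Z` it reduces termwise to `q^{k+1} E_{k+2}`, where
`E_j = ∑_{m ≥ 0} q^{m(m+j)} (q^{m+j+1};q)_∞ / (q;q)_m` equals `1`: the difference
`E_j - E_{j+1}` telescopes to `0`, and `E_j ≡ 1 mod q^{j+1}`.
-/

open Finset

theorem Nat.succ_le_succ_mul_succ_succ_div_two (m : ℕ) : m + 1 ≤ (m + 1) * (m + 2) / 2 :=
  (Nat.le_div_iff_mul_le two_pos).mpr (Nat.mul_le_mul_left _ (by omega))

theorem Nat.succ_succ_mul_succ_succ_succ_div_two (m : ℕ) :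
    (m + 2) * (m + 3) / 2 = (m + 1) * (m + 2) / 2 + (m + 2) := by
  rw [show (m + 2) * (m + 3) = (m + 1) * (m + 2) + 2 * (m + 2) by ring,
    Nat.add_mul_div_left _ _ two_pos]

theorem dvd_prod_sub_one {R ι : Type*} [CommRing R] {a : R} {f : ι → R} (s : Finset ι)
    (h : ∀ i ∈ s, a ∣ f i - 1) : a ∣ ∏ i ∈ s, f i - 1 := by
  induction s using Finset.cons_induction with
  | empty => simp
  | cons i s _ ih =>
    rw [prod_cons,
      show f i * ∏ j ∈ s, f j - 1 = f i * (∏ j ∈ s, f j - 1) + (f i - 1) by ring]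
    exact dvd_add ((ih fun j hj => h j (mem_cons_of_mem hj)).mul_left _)
      (h i (mem_cons_self i s))

theorem Ring.inverse_eq_mul_inverse_mul {M₀ : Type*} [CommMonoidWithZero M₀] {b : M₀}
    (hb : IsUnit b) (a : M₀) : Ring.inverse a = b * Ring.inverse (a * b) := by
  rw [Ring.mul_inverse_rev, ← mul_assoc, Ring.mul_inverse_cancel b hb, one_mul]

namespace PowerSeries

variable {R : Type*} [CommRing R]

theorem coeff_eq_of_X_pow_dvd_sub {n m : ℕ} {a b : R⟦X⟧} (h : X ^ n ∣ a - b) (hm : m < n) :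
    coeff m a = coeff m b := by
  rw [← sub_eq_zero, ← map_sub]
  exact X_pow_dvd_iff.mp h m hm

theorem eq_zero_of_forall_X_pow_dvd {a : R⟦X⟧} (h : ∀ n, X ^ n ∣ a) : a = 0 := by
  ext n
  exact X_pow_dvd_iff.mp (h (n + 1)) n n.lt_succ_self

theorem eq_zero_of_eq_mul_succ {D u : ℕ → R⟦X⟧} (hD : ∀ k, D k = u k * D (k + 1))
    (hX : ∀ k, X ^ k ∣ D k) : D 0 = 0 := by
  have hprod : ∀ k, D 0 = (∏ i ∈ range k, u i) * D k := by
    intro k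
    induction k with
    | zero => simp
    | succ k ih => rw [ih, hD k, prod_range_succ, mul_assoc]
  exact eq_zero_of_forall_X_pow_dvd fun k => hprod k ▸ (hX k).mul_left _

theorem isUnit_one_sub_X_pow {n : ℕ} (hn : n ≠ 0) : IsUnit (1 - X ^ n : R⟦X⟧) := by
  simp [isUnit_iff_constantCoeff, hn]

theorem isUnit_one_add_X_pow {n : ℕ} (hn : n ≠ 0) : IsUnit (1 + X ^ n : R⟦X⟧) := by
  simp [isUnit_iff_constantCoeff, hn]

section seriesSum

variable {f g : ℕ → R⟦X⟧}

theorem coeff_seriesSum (f : ℕ → R⟦X⟧) (N : ℕ) :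
    coeff N (seriesSum f) = coeff N (∑ n ∈ range (N + 1), f n) := by
  simp [seriesSum, map_sum]

theorem seriesSum_add : seriesSum (fun n => f n + g n) = seriesSum f + seriesSum g := by
  ext N
  simp [seriesSum, sum_add_distrib]

theorem seriesSum_sub : seriesSum (fun n => f n - g n) = seriesSum f - seriesSum g := by
  ext N
  simp [seriesSum, sum_sub_distrib]

theorem X_pow_dvd_seriesSum {M : ℕ} (h : ∀ n, X ^ M ∣ f n) : X ^ M ∣ seriesSum f :=
  X_pow_dvd_iff.mpr fun j hj => by
    rw [coeff_seriesSum, map_sum]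
    exact sum_eq_zero fun n _ => X_pow_dvd_iff.mp (h n) j hj

theorem seriesSum_eq_of_forall_X_pow_dvd {A : R⟦X⟧}
    (h : ∀ M, X ^ M ∣ A - ∑ n ∈ range M, f n) : seriesSum f = A := by
  ext N
  rw [coeff_seriesSum]
  exact (coeff_eq_of_X_pow_dvd_sub (h (N + 1)) N.lt_succ_self).symm

theorem X_pow_dvd_seriesSum_sub (hf : ∀ n, X ^ n ∣ f n) (M : ℕ) :
    X ^ M ∣ seriesSum f - ∑ n ∈ range M, f n := by
  refine X_pow_dvd_iff.mpr fun j hj => ?_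
  rw [map_sub, coeff_seriesSum, sub_eq_zero, map_sum, map_sum]
  refine sum_subset (range_subset_range.mpr hj) fun n _ hnj => ?_
  exact X_pow_dvd_iff.mp (hf n) j (by simp only [mem_range] at hnj; omega)

theorem seriesSum_mul_left (hf : ∀ n, X ^ n ∣ f n) (a : R⟦X⟧) :
    seriesSum (fun n => a * f n) = a * seriesSum f :=
  seriesSum_eq_of_forall_X_pow_dvd fun M => by
    rw [← mul_sum, ← mul_sub]
    exact (X_pow_dvd_seriesSum_sub hf M).mul_left a

theorem seriesSum_sub_succ (hg : ∀ n, X ^ n ∣ g n) :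
    seriesSum (fun n => g n - g (n + 1)) = g 0 :=
  seriesSum_eq_of_forall_X_pow_dvd fun M => by
    rw [sum_range_sub', sub_sub_cancel]
    exact hg M

theorem seriesSum_eq_add_seriesSum_succ (hf : ∀ n, X ^ n ∣ f n) :
    seriesSum f = f 0 + seriesSum fun n => f (n + 1) := by
  ext N
  simp only [seriesSum, coeff_mk, map_add]
  rw [sum_range_succ', sum_range_succ, X_pow_dvd_iff.mp (hf (N + 1)) N N.lt_succ_self, add_zero,
    add_comm]

end seriesSum

section seriesProd

variable {f : ℕ → R⟦X⟧}

theorem coeff_seriesProd (f : ℕ → R⟦X⟧) (N : ℕ) :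
    coeff N (seriesProd f) = coeff N (∏ k ∈ range (N + 1), f k) :=
  coeff_mk _ _

theorem seriesProd_eq_of_forall_X_pow_dvd {A : R⟦X⟧}
    (h : ∀ M, X ^ M ∣ A - ∏ k ∈ range M, f k) : seriesProd f = A := by
  ext N
  rw [coeff_seriesProd]
  exact (coeff_eq_of_X_pow_dvd_sub (h (N + 1)) N.lt_succ_self).symm

theorem X_pow_succ_dvd_prod_range_sub (hf : ∀ k, X ^ (k + 1) ∣ f k - 1) {j n : ℕ}
    (h : j ≤ n) : X ^ (j + 1) ∣ ∏ k ∈ range n, f k - ∏ k ∈ range j, f k := by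
  rw [← prod_range_mul_prod_Ico f h, ← mul_sub_one]
  refine (dvd_prod_sub_one _ fun k hk => ?_).mul_left _
  exact (pow_dvd_pow X (by simp only [mem_Ico] at hk; omega)).trans (hf k)

theorem X_pow_succ_dvd_seriesProd_sub (hf : ∀ k, X ^ (k + 1) ∣ f k - 1) (M : ℕ) :
    X ^ (M + 1) ∣ seriesProd f - ∏ k ∈ range M, f k := by
  refine X_pow_dvd_iff.mpr fun j hj => ?_
  rw [map_sub, coeff_seriesProd, sub_eq_zero,
    coeff_eq_of_X_pow_dvd_sub (X_pow_succ_dvd_prod_range_sub hf j.le_succ) j.lt_succ_self,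
    coeff_eq_of_X_pow_dvd_sub (X_pow_succ_dvd_prod_range_sub hf (Nat.lt_succ_iff.mp hj))
      j.lt_succ_self]

theorem seriesProd_eq_mul_seriesProd_succ (hf : ∀ k, X ^ (k + 1) ∣ f k - 1) :
    seriesProd f = f 0 * seriesProd fun k => f (k + 1) := by
  refine seriesProd_eq_of_forall_X_pow_dvd fun M => ?_
  cases M with
  | zero => simp
  | succ M =>
    rw [prod_range_succ', mul_comm _ (f 0), ← mul_sub]
    exact (X_pow_succ_dvd_seriesProd_sub
      (fun k => (pow_dvd_pow X (k + 1).le_succ).trans (hf (k + 1))) M).mul_left _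

theorem X_pow_dvd_seriesProd_sub_one {a : ℕ} (h : ∀ k, X ^ a ∣ f k - 1) :
    X ^ a ∣ seriesProd f - 1 :=
  X_pow_dvd_iff.mpr fun j hj => by
    rw [map_sub, coeff_seriesProd, ← map_sub]
    exact X_pow_dvd_iff.mp (dvd_prod_sub_one _ fun k _ => h k) j hj

end seriesProd

noncomputable def qPochhammer (n : ℕ) : R⟦X⟧ := ∏ k ∈ range n, (1 - X ^ (k + 1))

noncomputable def negQPochhammer (n : ℕ) : R⟦X⟧ := ∏ k ∈ range n, (1 + X ^ (k + 1))

noncomputable def qPochhammerInf (a : ℕ) : R⟦X⟧ := seriesProd fun k => 1 - X ^ (a + k)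

theorem qPochhammerInf_eq_mul {a : ℕ} (ha : a ≠ 0) :
    (qPochhammerInf a : R⟦X⟧) = (1 - X ^ a) * qPochhammerInf (a + 1) := by
  rw [qPochhammerInf, seriesProd_eq_mul_seriesProd_succ fun k => ?_]
  · simp only [add_zero, qPochhammerInf, add_assoc, Nat.add_comm 1]
  · rw [sub_sub_cancel_left]
    exact (pow_dvd_pow X (by omega)).neg_right

theorem X_pow_dvd_qPochhammerInf_sub_one (a : ℕ) : X ^ a ∣ (qPochhammerInf a : R⟦X⟧) - 1 :=
  X_pow_dvd_seriesProd_sub_one fun k => by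
    rw [sub_sub_cancel_left]
    exact (pow_dvd_pow X (a.le_add_right k)).neg_right

theorem inverse_qPochhammer (n : ℕ) :
    Ring.inverse (qPochhammer n : R⟦X⟧) =
      (1 - X ^ (n + 1)) * Ring.inverse (qPochhammer (n + 1)) := by
  rw [qPochhammer, qPochhammer, prod_range_succ]
  exact Ring.inverse_eq_mul_inverse_mul (isUnit_one_sub_X_pow n.succ_ne_zero) _

theorem inverse_negQPochhammer (n : ℕ) :
    Ring.inverse (negQPochhammer n : R⟦X⟧) =
      (1 + X ^ (n + 1)) * Ring.inverse (negQPochhammer (n + 1)) := by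
  rw [negQPochhammer, negQPochhammer, prod_range_succ]
  exact Ring.inverse_eq_mul_inverse_mul (isUnit_one_add_X_pow n.succ_ne_zero) _

noncomputable def eTerm (j m : ℕ) : R⟦X⟧ :=
  X ^ (m * (m + j)) * qPochhammerInf (m + j + 1) * Ring.inverse (qPochhammer m)

-- The factor `1 - X ^ m` kills the term `m = 0` and turns `1 / (q;q)_m` into `1 / (q;q)_{m-1}`.
noncomputable def eTelescoper (j m : ℕ) : R⟦X⟧ :=
  X ^ (m * (m + j)) * (1 - X ^ m) * qPochhammerInf (m + j + 1) * Ring.inverse (qPochhammer m)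

noncomputable def zTerm (k m : ℕ) : R⟦X⟧ :=
  X ^ ((m + 1) ^ 2 + k * (m + 1)) * qPochhammerInf (m + k + 2) * Ring.inverse (qPochhammer m)
    * Ring.inverse (1 + X ^ (m + 1))

noncomputable def wTerm (k m : ℕ) : R⟦X⟧ :=
  (-1) ^ m * X ^ ((m + 1) * (m + 2) / 2 + k * (m + 1)) * Ring.inverse (negQPochhammer (m + 1))

noncomputable def wTelescoper (k m : ℕ) : R⟦X⟧ :=
  (-1) ^ m * X ^ ((m + 1) * (m + 2) / 2 + k * (m + 1)) * Ring.inverse (negQPochhammer m)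

theorem X_pow_dvd_eTerm (j m : ℕ) : X ^ m ∣ (eTerm j m : R⟦X⟧) :=
  ((pow_dvd_pow X (by nlinarith [Nat.le_mul_self m])).mul_right _).mul_right _

theorem X_pow_succ_dvd_eTerm_succ (j m : ℕ) : X ^ (j + 1) ∣ (eTerm j (m + 1) : R⟦X⟧) :=
  ((pow_dvd_pow X (by nlinarith)).mul_right _).mul_right _

theorem X_pow_dvd_eTelescoper (j m : ℕ) : X ^ m ∣ (eTelescoper j m : R⟦X⟧) :=
  (((pow_dvd_pow X (by nlinarith [Nat.le_mul_self m])).mul_right _).mul_right _).mul_right _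

theorem X_pow_add_succ_dvd_zTerm (k m : ℕ) : X ^ (m + k + 1) ∣ (zTerm k m : R⟦X⟧) :=
  (((pow_dvd_pow X (by nlinarith)).mul_right _).mul_right _).mul_right _

theorem X_pow_add_succ_dvd_wTerm (k m : ℕ) : X ^ (m + k + 1) ∣ (wTerm k m : R⟦X⟧) := by
  have := Nat.succ_le_succ_mul_succ_succ_div_two m
  exact ((pow_dvd_pow X (by nlinarith)).mul_left _).mul_right _

theorem X_pow_dvd_wTelescoper (k m : ℕ) : X ^ m ∣ (wTelescoper k m : R⟦X⟧) := by
  have := Nat.succ_le_succ_mul_succ_succ_div_two m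
  exact ((pow_dvd_pow X (by omega)).mul_left _).mul_right _

theorem eTerm_sub_eTerm_succ (j m : ℕ) :
    (eTerm j m - eTerm (j + 1) m : R⟦X⟧) = eTelescoper j m - eTelescoper j (m + 1) := by
  simp only [eTerm, eTelescoper]
  rw [qPochhammerInf_eq_mul (a := m + j + 1) (by omega), inverse_qPochhammer m,
    show m + (j + 1) + 1 = m + j + 1 + 1 by ring, show m + 1 + j + 1 = m + j + 1 + 1 by ring]
  ring

theorem zTerm_add_mul_zTerm_succ (k m : ℕ) :
    (zTerm k m + (1 + X ^ (k + 1)) * zTerm (k + 1) m : R⟦X⟧) =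
      X ^ (k + 1) * eTerm (k + 2) m := by
  simp only [zTerm, eTerm]
  rw [qPochhammerInf_eq_mul (a := m + k + 2) (by omega),
    show m + (k + 1) + 2 = m + k + 2 + 1 by ring, show m + (k + 2) + 1 = m + k + 2 + 1 by ring]
  linear_combination (X ^ ((m + 1) ^ 2 + k * (m + 1)) * qPochhammerInf (m + k + 2 + 1)
    * Ring.inverse (qPochhammer m) : R⟦X⟧) *
      Ring.mul_inverse_cancel _ (isUnit_one_add_X_pow (R := R) m.add_one_ne_zero)

theorem wTerm_add_mul_wTerm_succ (k m : ℕ) :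
    (wTerm k m + (1 + X ^ (k + 1)) * wTerm (k + 1) m : R⟦X⟧) =
      wTelescoper k m - wTelescoper k (m + 1) := by
  simp only [wTerm, wTelescoper]
  rw [inverse_negQPochhammer m, show m + 1 + 1 = m + 2 by ring, show m + 1 + 2 = m + 3 by ring,
    Nat.succ_succ_mul_succ_succ_succ_div_two]
  ring

theorem seriesSum_eTerm_succ (j : ℕ) :
    seriesSum (eTerm j : ℕ → R⟦X⟧) = seriesSum (eTerm (j + 1)) := by
  rw [← sub_eq_zero, ← seriesSum_sub]
  simp only [eTerm_sub_eTerm_succ]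
  rw [seriesSum_sub_succ (X_pow_dvd_eTelescoper j)]
  simp [eTelescoper]

theorem X_pow_succ_dvd_seriesSum_eTerm_sub_one (j : ℕ) :
    X ^ (j + 1) ∣ seriesSum (eTerm j : ℕ → R⟦X⟧) - 1 := by
  rw [seriesSum_eq_add_seriesSum_succ (X_pow_dvd_eTerm j), add_sub_right_comm]
  refine dvd_add ?_ (X_pow_dvd_seriesSum (X_pow_succ_dvd_eTerm_succ j))
  simpa [eTerm, qPochhammer] using X_pow_dvd_qPochhammerInf_sub_one (R := R) (j + 1)

theorem seriesSum_eTerm (j : ℕ) : seriesSum (eTerm j : ℕ → R⟦X⟧) = 1 := by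
  have hshift : ∀ n, seriesSum (eTerm j : ℕ → R⟦X⟧) = seriesSum (eTerm (j + n)) := by
    intro n
    induction n with
    | zero => rfl
    | succ n ih => rw [ih, seriesSum_eTerm_succ, add_assoc]
  refine sub_eq_zero.mp (eq_zero_of_forall_X_pow_dvd fun n => ?_)
  rw [hshift n]
  exact (pow_dvd_pow X (by omega)).trans (X_pow_succ_dvd_seriesSum_eTerm_sub_one (j + n))

theorem seriesSum_zTerm_add (k : ℕ) :
    seriesSum (zTerm k : ℕ → R⟦X⟧) + (1 + X ^ (k + 1)) * seriesSum (zTerm (k + 1)) =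
      X ^ (k + 1) := by
  rw [← seriesSum_mul_left fun m =>
      (pow_dvd_pow X (by omega)).trans (X_pow_add_succ_dvd_zTerm _ m), ← seriesSum_add]
  simp only [zTerm_add_mul_zTerm_succ]
  rw [seriesSum_mul_left (X_pow_dvd_eTerm _), seriesSum_eTerm, mul_one]

theorem seriesSum_wTerm_add (k : ℕ) :
    seriesSum (wTerm k : ℕ → R⟦X⟧) + (1 + X ^ (k + 1)) * seriesSum (wTerm (k + 1)) =
      X ^ (k + 1) := by
  rw [← seriesSum_mul_left fun m =>
      (pow_dvd_pow X (by omega)).trans (X_pow_add_succ_dvd_wTerm _ m), ← seriesSum_add]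
  simp only [wTerm_add_mul_wTerm_succ]
  rw [seriesSum_sub_succ (X_pow_dvd_wTelescoper k)]
  simp [wTelescoper, negQPochhammer, add_comm]

theorem seriesSum_zTerm_eq_seriesSum_wTerm :
    seriesSum (zTerm 0 : ℕ → R⟦X⟧) = seriesSum (wTerm 0) := by
  refine sub_eq_zero.mp (eq_zero_of_eq_mul_succ
    (D := fun k => seriesSum (zTerm (R := R) k) - seriesSum (wTerm k))
    (u := fun k => -(1 + X ^ (k + 1))) (fun k => ?_) (fun k => dvd_sub ?_ ?_))
  · linear_combination seriesSum_zTerm_add (R := R) k - seriesSum_wTerm_add (R := R) k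
  · exact X_pow_dvd_seriesSum fun m =>
      (pow_dvd_pow X (by omega)).trans (X_pow_add_succ_dvd_zTerm k m)
  · exact X_pow_dvd_seriesSum fun m =>
      (pow_dvd_pow X (by omega)).trans (X_pow_add_succ_dvd_wTerm k m)

end PowerSeries

/-- Theorem 2.1. -/
theorem stmt1 :
    seriesSum (fun m =>
      (X : PowerSeries ℚ) ^ ((m + 1) ^ 2)
        * seriesProd (fun k => 1 - X ^ (m + 1 + 1 + k))
        * Ring.inverse (∏ k ∈ Finset.range (m + 1 - 1), (1 - X ^ (k + 1)))
        * Ring.inverse (1 + X ^ (m + 1))) =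
    seriesSum (fun m =>
      (-1 : PowerSeries ℚ) ^ (m + 1 - 1) * X ^ ((m + 1) * (m + 1 + 1) / 2)
        * Ring.inverse (∏ j ∈ Finset.range (m + 1), (1 + X ^ (j + 1)))) := by
  convert seriesSum_zTerm_eq_seriesSum_wTerm (R := ℚ) using 3 with m m
  · simp [zTerm, qPochhammerInf, qPochhammer]
  · simp [wTerm, negQPochhammer]
end

section
/- For every integer n ≥ 1, the number of partitions λ of n whose Durfee square size d satisfies λ_d > d equals the alternating sum ∑_{j≥0} (−1)^j p(n − j(j+1)/2), where the sum runs over all j ≥ 0 with j(j+1)/2 ≤ n. -/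
/-- `l.nthPart i` is the `i`-th largest part of `l` (1-indexed); `0` if `i` is
out of range. -/
def Nat.Partition.nthPart {n : ℕ} (l : n.Partition) (i : ℕ) : ℕ :=
  (l.parts.sort (· ≥ ·)).getD (i - 1) 0

/-- The size of the Durfee square of `l`: the largest `i ≥ 1` with `λ_i ≥ i`. -/
noncomputable def Nat.Partition.durfee {n : ℕ} (l : n.Partition) : ℕ :=
  sSup {i : ℕ | 1 ≤ i ∧ i ≤ l.nthPart i}

/-!
Call a partition *flush at level `k`* when its largest `d × (d + k)` rectangle has a bottom row
of length exactly `d + k`. Deleting that row and adding a cell to each of the `d - 1` rows above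
it removes `k + 1` cells, and maps the partitions of `n` flush at level `k` bijectively onto the
partitions of `n - (k + 1)` that are not flush at level `k + 1`: the level-`(k + 1)` rectangle of
the image has side `d - 1`, and its bottom row overhangs. So the numbers `b_k(n)` of partitions
flush at level `k` satisfy `b_k(n) = p(n - k - 1) - b_{k+1}(n - k - 1)`; unrolling from `k = 0`,
the `j`-th step has removed `1 + ⋯ + j = j(j+1)/2` cells. The partitions in the theorem are
exactly those not flush at level `0`, counted by `p(n) - b_0(n)`.
-/

namespace Durfee

/-- 1-indexed as in `Nat.Partition.nthPart`, so `row L 0` is a junk value. -/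
def row (L : List ℕ) (i : ℕ) : ℕ := L.getD (i - 1) 0

section Row

variable {L : List ℕ} {i j m x : ℕ}

theorem row_eq_getElem (h : i - 1 < L.length) : row L i = L[i - 1] :=
  List.getD_eq_getElem _ _ h

theorem lt_length_of_row_pos (h : 0 < row L i) : i - 1 < L.length := by
  by_contra! hi
  rw [row, List.getD_eq_default _ _ hi] at h
  exact h.false

theorem row_le_sum : row L i ≤ L.sum := by
  rcases lt_or_ge (i - 1) L.length with h | h
  · rw [row_eq_getElem h]
    exact List.le_sum_of_mem (List.getElem_mem h)
  · rw [row, List.getD_eq_default _ _ h]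
    exact Nat.zero_le _

theorem row_anti (hL : L.Pairwise (· ≥ ·)) (hi : 1 ≤ i) (hij : i ≤ j) :
    row L j ≤ row L i := by
  rcases hij.eq_or_lt with rfl | hlt
  · exact le_rfl
  rcases lt_or_ge (j - 1) L.length with hj | hj
  · rw [row_eq_getElem hj, row_eq_getElem (by omega)]
    exact List.pairwise_iff_getElem.1 hL _ _ _ _ (by omega)
  · rw [row, List.getD_eq_default _ _ hj]
    exact Nat.zero_le _

theorem row_le_of_mem_take (hL : L.Pairwise (· ≥ ·)) (hx : x ∈ L.take m) : row L m ≤ x := by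
  obtain ⟨j, hj, rfl⟩ := List.mem_iff_getElem.1 hx
  simp only [List.length_take, lt_inf_iff] at hj
  have := row_anti hL (i := j + 1) (j := m) (by omega) (by omega)
  rw [row_eq_getElem (i := j + 1) (by omega)] at this
  simpa using this

theorem pairwise_ge_of_row_succ_le (h : ∀ i, 1 ≤ i → row L (i + 1) ≤ row L i) :
    L.Pairwise (· ≥ ·) := by
  rw [← List.isChain_iff_pairwise, List.isChain_iff_getElem]
  intro i hi
  have := h (i + 1) (by omega)
  rwa [row_eq_getElem (by omega), row_eq_getElem (by omega)] at this

end Row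

/-- The side `d` of the largest `d × (d + k)` rectangle in the diagram with rows `L`;
`durfeeRect 0` is the Durfee square. -/
noncomputable def durfeeRect (k : ℕ) (L : List ℕ) : ℕ :=
  sSup {i | 1 ≤ i ∧ i + k ≤ row L i}

/-- For sorted `L`, both `IsFlushAt k d L` and `IsOverhangAt k d L` force `durfeeRect k L = d`;
they differ in whether row `d` has exactly `d + k` cells or more (or `d = 0`). -/
def IsFlushAt (k d : ℕ) (L : List ℕ) : Prop :=
  1 ≤ d ∧ row L d = d + k ∧ row L (d + 1) ≤ d + k

def IsFlush (k : ℕ) (L : List ℕ) : Prop :=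
  ∃ d, IsFlushAt k d L

def IsOverhangAt (k e : ℕ) (L : List ℕ) : Prop :=
  (1 ≤ e → e + k < row L e) ∧ row L (e + 1) ≤ e + k

section DurfeeRect

variable {k d e : ℕ} {L : List ℕ}

theorem bddAbove_rect (k : ℕ) (L : List ℕ) : BddAbove {i | 1 ≤ i ∧ i + k ≤ row L i} :=
  ⟨L.sum, fun _ hi => (Nat.le_add_right _ k).trans (hi.2.trans row_le_sum)⟩

theorem le_durfeeRect (hd : 1 ≤ d) (h : d + k ≤ row L d) : d ≤ durfeeRect k L :=
  le_csSup (bddAbove_rect k L) ⟨hd, h⟩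

theorem add_le_row_durfeeRect (h : 1 ≤ durfeeRect k L) :
    durfeeRect k L + k ≤ row L (durfeeRect k L) := by
  rcases Set.eq_empty_or_nonempty {i | 1 ≤ i ∧ i + k ≤ row L i} with hS | hS
  · rw [durfeeRect, hS, csSup_empty] at h
    exact absurd h (by decide)
  · exact (Nat.sSup_mem hS (bddAbove_rect k L)).2

theorem row_succ_durfeeRect_lt : row L (durfeeRect k L + 1) < durfeeRect k L + 1 + k := by
  by_contra! h
  have := le_durfeeRect (Nat.le_add_left 1 _) h
  omega

theorem durfeeRect_eq (hL : L.Pairwise (· ≥ ·)) (he : 1 ≤ e → e + k ≤ row L e)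
    (hnext : row L (e + 1) < e + 1 + k) : durfeeRect k L = e := by
  refine le_antisymm (csSup_le' fun i hi => ?_) ?_
  · by_contra! hlt
    have := row_anti hL (Nat.le_add_left 1 e) hlt
    have := hi.2
    omega
  · rcases Nat.eq_zero_or_pos e with rfl | he1
    · exact Nat.zero_le _
    · exact le_durfeeRect he1 (he he1)

theorem IsFlushAt.durfeeRect_eq (hL : L.Pairwise (· ≥ ·)) (h : IsFlushAt k d L) :
    durfeeRect k L = d :=
  Durfee.durfeeRect_eq hL (fun _ => h.2.1.ge) (by have := h.2.2; omega)

theorem IsOverhangAt.durfeeRect_eq (hL : L.Pairwise (· ≥ ·)) (h : IsOverhangAt k e L) :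
    durfeeRect k L = e :=
  Durfee.durfeeRect_eq hL (fun he => (h.1 he).le) (by have := h.2; omega)

theorem isFlush_iff (hL : L.Pairwise (· ≥ ·)) :
    IsFlush k L ↔ IsFlushAt k (durfeeRect k L) L :=
  ⟨fun ⟨_, hd⟩ => hd.durfeeRect_eq hL ▸ hd, fun h => ⟨_, h⟩⟩

theorem IsOverhangAt.not_isFlush (hL : L.Pairwise (· ≥ ·)) (h : IsOverhangAt k e L) :
    ¬ IsFlush k L := by
  rintro ⟨d, hd⟩
  have hde : d = e := (hd.durfeeRect_eq hL).symm.trans (h.durfeeRect_eq hL)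
  have := h.1 (hde ▸ hd.1)
  have := hd.2.1
  subst hde
  omega

theorem not_isFlush_iff (hL : L.Pairwise (· ≥ ·)) :
    ¬ IsFlush k L ↔ IsOverhangAt k (durfeeRect k L) L := by
  refine ⟨fun h => ⟨fun hd => ?_, by have := row_succ_durfeeRect_lt (k := k) (L := L); omega⟩,
    fun h => h.not_isFlush hL⟩
  refine (add_le_row_durfeeRect hd).lt_of_ne fun heq => h ⟨_, hd, heq.symm, ?_⟩
  have := row_succ_durfeeRect_lt (k := k) (L := L)
  omega

theorem durfeeRect_add_lt_row_iff (hL : L.Pairwise (· ≥ ·)) (h1 : k < row L 1) :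
    durfeeRect k L + k < row L (durfeeRect k L) ↔ ¬ IsFlush k L := by
  have hD : 1 ≤ durfeeRect k L := le_durfeeRect le_rfl (by omega)
  rw [not_isFlush_iff hL, IsOverhangAt]
  have := row_succ_durfeeRect_lt (k := k) (L := L)
  exact ⟨fun h => ⟨fun _ => h, by omega⟩, fun h => h.1 hD⟩

theorem IsFlushAt.le_length (h : IsFlushAt k d L) : d ≤ L.length := by
  obtain ⟨hd, hrow, -⟩ := h
  have := lt_length_of_row_pos (L := L) (i := d) (by omega)
  omega

theorem IsOverhangAt.le_length (h : IsOverhangAt k e L) : e ≤ L.length := by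
  rcases Nat.eq_zero_or_pos e with rfl | he
  · exact Nat.zero_le _
  · have := lt_length_of_row_pos (L := L) (i := e) (by have := h.1 he; omega)
    omega

end DurfeeRect

def eraseRowAddCol (d : ℕ) (L : List ℕ) : List ℕ :=
  (L.take (d - 1)).map (· + 1) ++ L.drop d

def insertRowEraseCol (r e : ℕ) (L : List ℕ) : List ℕ :=
  (L.take e).map (· - 1) ++ r :: L.drop e

theorem sum_map_add_one (l : List ℕ) : (l.map (· + 1)).sum = l.sum + l.length := by
  simp [List.sum_map_add]

theorem map_add_one_map_sub_one {l : List ℕ} (hl : ∀ x ∈ l, 0 < x) :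
    (l.map (· - 1)).map (· + 1) = l := by
  rw [List.map_map]
  exact List.map_congr_left (fun x hx => Nat.sub_add_cancel (hl x hx)) |>.trans (List.map_id l)

theorem getD_drop (L : List ℕ) (m j : ℕ) : (L.drop m).getD j 0 = L.getD (m + j) 0 := by
  simp only [List.getD_eq_getElem?_getD, List.getElem?_drop]

section EraseRow

variable {k d i : ℕ} {L : List ℕ}

theorem length_take_map_add_one (hd : d ≤ L.length) :
    ((L.take (d - 1)).map (· + 1)).length = d - 1 := by
  simp only [List.length_map, List.length_take]
  omega

theorem row_eraseRowAddCol_of_lt (hd : d ≤ L.length) (hi : 1 ≤ i) (hid : i < d) :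
    row (eraseRowAddCol d L) i = row L i + 1 := by
  have hlen := length_take_map_add_one hd
  rw [row, eraseRowAddCol, List.getD_append _ _ _ _ (by omega), List.getD_eq_getElem _ _ (by omega),
    row_eq_getElem (by omega)]
  simp

theorem row_eraseRowAddCol_of_le (hd : d ≤ L.length) (hd1 : 1 ≤ d) (hdi : d ≤ i) :
    row (eraseRowAddCol d L) i = row L (i + 1) := by
  rw [row, eraseRowAddCol,
    List.getD_append_right _ _ _ _ (by rw [length_take_map_add_one hd]; omega),
    length_take_map_add_one hd, getD_drop, row]
  congr 1
  omega

theorem take_append_getElem_cons_drop (hd1 : 1 ≤ d) (hd : d ≤ L.length) :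
    L.take (d - 1) ++ L[d - 1] :: L.drop d = L := by
  obtain ⟨c, rfl⟩ := Nat.exists_eq_add_of_le' hd1
  simp only [Nat.add_sub_cancel]
  rw [← List.drop_eq_getElem_cons, List.take_append_drop]

theorem sum_eraseRowAddCol (hd1 : 1 ≤ d) (hd : d ≤ L.length) :
    (eraseRowAddCol d L).sum + row L d = L.sum + (d - 1) := by
  conv_rhs => rw [← take_append_getElem_cons_drop hd1 hd]
  rw [eraseRowAddCol, row_eq_getElem (by omega)]
  simp only [List.sum_append, List.sum_cons, sum_map_add_one, List.length_take]
  omega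

theorem pos_eraseRowAddCol (hL : ∀ x ∈ L, 0 < x) : ∀ x ∈ eraseRowAddCol d L, 0 < x := by
  simp only [eraseRowAddCol, List.mem_append, List.mem_map]
  rintro x (⟨y, -, rfl⟩ | hx)
  · exact Nat.succ_pos y
  · exact hL x (List.mem_of_mem_drop hx)

theorem insertRowEraseCol_eraseRowAddCol (hd1 : 1 ≤ d) (hd : d ≤ L.length) :
    insertRowEraseCol (row L d) (d - 1) (eraseRowAddCol d L) = L := by
  have hlen := length_take_map_add_one hd
  rw [insertRowEraseCol, eraseRowAddCol, List.take_left' hlen, List.drop_left' hlen, List.map_map]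
  simp only [Function.comp_def, Nat.add_sub_cancel, List.map_id',
    row_eq_getElem (by omega : d - 1 < L.length)]
  exact take_append_getElem_cons_drop hd1 hd

theorem IsFlushAt.pairwise_eraseRowAddCol (hL : L.Pairwise (· ≥ ·)) (h : IsFlushAt k d L) :
    (eraseRowAddCol d L).Pairwise (· ≥ ·) := by
  have hd := h.le_length
  obtain ⟨hd1, hrow, hnext⟩ := h
  refine pairwise_ge_of_row_succ_le fun i hi => ?_
  rcases lt_trichotomy (i + 1) d with hlt | heq | hgt
  · rw [row_eraseRowAddCol_of_lt hd hi (by omega), row_eraseRowAddCol_of_lt hd (by omega) hlt]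
    have := row_anti hL hi (Nat.le_add_right i 1)
    omega
  · rw [row_eraseRowAddCol_of_lt hd hi (by omega), heq, row_eraseRowAddCol_of_le hd hd1 le_rfl]
    have := row_anti hL hi (by omega : i ≤ d)
    omega
  · rw [row_eraseRowAddCol_of_le hd hd1 (by omega), row_eraseRowAddCol_of_le hd hd1 (by omega)]
    exact row_anti hL (by omega) (Nat.le_add_right _ 1)

theorem IsFlushAt.isOverhangAt_eraseRowAddCol (hL : L.Pairwise (· ≥ ·)) (h : IsFlushAt k d L) :
    IsOverhangAt (k + 1) (d - 1) (eraseRowAddCol d L) := by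
  have hd := h.le_length
  obtain ⟨hd1, hrow, hnext⟩ := h
  refine ⟨fun he => ?_, ?_⟩
  · rw [row_eraseRowAddCol_of_lt hd he (by omega)]
    have := row_anti hL he (by omega : d - 1 ≤ d)
    omega
  · rw [Nat.sub_add_cancel hd1, row_eraseRowAddCol_of_le hd hd1 le_rfl]
    omega

end EraseRow

section InsertRow

variable {k r e i : ℕ} {L : List ℕ}

theorem length_take_map_sub_one (he : e ≤ L.length) : ((L.take e).map (· - 1)).length = e := by
  simp only [List.length_map, List.length_take]
  omega

theorem row_insertRowEraseCol_of_le (he : e ≤ L.length) (hi : 1 ≤ i) (hie : i ≤ e) :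
    row (insertRowEraseCol r e L) i = row L i - 1 := by
  have hlen := length_take_map_sub_one he
  rw [row, insertRowEraseCol, List.getD_append _ _ _ _ (by omega),
    List.getD_eq_getElem _ _ (by omega), row_eq_getElem (by omega)]
  simp

theorem row_insertRowEraseCol_succ (he : e ≤ L.length) :
    row (insertRowEraseCol r e L) (e + 1) = r := by
  rw [row, insertRowEraseCol,
    List.getD_append_right _ _ _ _ (by rw [length_take_map_sub_one he]; omega),
    length_take_map_sub_one he]
  simp

theorem row_insertRowEraseCol_of_lt (he : e ≤ L.length) (hei : e + 1 < i) :
    row (insertRowEraseCol r e L) i = row L (i - 1) := by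
  rw [row, insertRowEraseCol,
    List.getD_append_right _ _ _ _ (by rw [length_take_map_sub_one he]; omega),
    length_take_map_sub_one he, show i - 1 - e = (i - 2 - e) + 1 by omega, List.getD_cons_succ,
    getD_drop, row]
  congr 1
  omega

theorem sum_insertRowEraseCol (hL : ∀ x ∈ L, 0 < x) (he : e ≤ L.length) :
    (insertRowEraseCol r e L).sum + e = L.sum + r := by
  have htake := congrArg List.sum
    (map_add_one_map_sub_one fun x (hx : x ∈ L.take e) => hL x (List.mem_of_mem_take hx))
  rw [sum_map_add_one, length_take_map_sub_one he] at htake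
  conv_rhs => rw [← List.take_append_drop e L]
  simp only [insertRowEraseCol, List.sum_append, List.sum_cons]
  omega

theorem eraseRowAddCol_insertRowEraseCol (hL : ∀ x ∈ L, 0 < x) (he : e ≤ L.length) :
    eraseRowAddCol (e + 1) (insertRowEraseCol r e L) = L := by
  have hlen := length_take_map_sub_one (L := L) he
  rw [eraseRowAddCol, insertRowEraseCol, Nat.add_sub_cancel, List.take_left' hlen,
    map_add_one_map_sub_one fun x hx => hL x (List.mem_of_mem_take hx),
    ← List.singleton_append, ← List.append_assoc,
    List.drop_left' (by rw [List.length_append, hlen, List.length_singleton]),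
    List.take_append_drop]

theorem IsOverhangAt.isFlushAt_insertRowEraseCol (h : IsOverhangAt (k + 1) e L) :
    IsFlushAt k (e + 1) (insertRowEraseCol (e + 1 + k) e L) := by
  have he := h.le_length
  refine ⟨Nat.le_add_left 1 e, row_insertRowEraseCol_succ he, ?_⟩
  rw [row_insertRowEraseCol_of_lt he (by omega), Nat.add_sub_cancel]
  have := h.2
  omega

theorem IsOverhangAt.pairwise_insertRowEraseCol (hL : L.Pairwise (· ≥ ·))
    (h : IsOverhangAt (k + 1) e L) : (insertRowEraseCol (e + 1 + k) e L).Pairwise (· ≥ ·) := by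
  have he := h.le_length
  refine pairwise_ge_of_row_succ_le fun i hi => ?_
  obtain hie | rfl | hie := lt_trichotomy i e
  · rw [row_insertRowEraseCol_of_le he hi hie.le,
      row_insertRowEraseCol_of_le he (by omega) (by omega : i + 1 ≤ e)]
    have := row_anti hL hi (Nat.le_add_right i 1)
    omega
  · rw [row_insertRowEraseCol_succ he, row_insertRowEraseCol_of_le he hi le_rfl]
    have := h.1 hi
    omega
  obtain rfl | hie := (show e + 1 ≤ i by omega).eq_or_lt
  · rw [row_insertRowEraseCol_of_lt he (by omega), row_insertRowEraseCol_succ he,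
      Nat.add_sub_cancel]
    have := h.2
    omega
  · rw [row_insertRowEraseCol_of_lt he (by omega), row_insertRowEraseCol_of_lt he (by omega),
      Nat.add_sub_cancel]
    exact row_anti hL (by omega) (by omega)

theorem IsOverhangAt.pos_insertRowEraseCol (hL : L.Pairwise (· ≥ ·)) (hpos : ∀ x ∈ L, 0 < x)
    (h : IsOverhangAt (k + 1) e L) : ∀ x ∈ insertRowEraseCol (e + 1 + k) e L, 0 < x := by
  simp only [insertRowEraseCol, List.mem_append, List.mem_map, List.mem_cons]
  rintro x (⟨y, hy, rfl⟩ | rfl | hx)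
  · have he : 1 ≤ e := by
      have := (List.length_pos_of_mem hy).trans_le (List.length_take_le e L)
      omega
    have := row_le_of_mem_take hL hy
    have := h.1 he
    omega
  · omega
  · exact hpos x (List.mem_of_mem_drop hx)

end InsertRow

@[ext]
structure SortedPartition (n : ℕ) where
  parts : List ℕ
  sorted : parts.Pairwise (· ≥ ·)
  pos : ∀ x ∈ parts, 0 < x
  sum_eq : parts.sum = n

def sortedPartitionEquiv (n : ℕ) : n.Partition ≃ SortedPartition n where
  toFun l := ⟨l.parts.sort (· ≥ ·), Multiset.pairwise_sort _ _,
    fun _ hx => l.parts_pos ((Multiset.mem_sort _).1 hx),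
    by rw [← Multiset.sum_coe, Multiset.sort_eq, l.parts_sum]⟩
  invFun L := ⟨L.parts, fun hi => L.pos _ (Multiset.mem_coe.1 hi), by simpa using L.sum_eq⟩
  left_inv l := Nat.Partition.ext (Multiset.sort_eq _ _)
  right_inv L := SortedPartition.ext <|
    List.Perm.eq_of_pairwise' (Multiset.pairwise_sort (L.parts : Multiset ℕ) _) L.sorted
      (Multiset.coe_eq_coe.1 (Multiset.sort_eq (L.parts : Multiset ℕ) _))

instance (n : ℕ) : Finite (SortedPartition n) :=
  .of_equiv _ (sortedPartitionEquiv n)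

theorem SortedPartition.row_one_pos {n : ℕ} (L : SortedPartition n) (hn : 1 ≤ n) :
    0 < row L.parts 1 := by
  obtain ⟨_ | ⟨a, t⟩, -, hpos, hsum⟩ := L
  · simp at hsum
    omega
  · exact hpos a List.mem_cons_self

theorem card_sortedPartition (n : ℕ) :
    Nat.card (SortedPartition n) = Fintype.card n.Partition := by
  rw [← Nat.card_congr (sortedPartitionEquiv n), Nat.card_eq_fintype_card]

noncomputable def flushCount (k n : ℕ) : ℕ :=
  Nat.card {L : SortedPartition n // IsFlush k L.parts}

theorem card_not_isFlush (k n : ℕ) :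
    (Nat.card {L : SortedPartition n // ¬ IsFlush k L.parts} : ℤ) =
      Fintype.card n.Partition - flushCount k n := by
  classical
  have h := Nat.card_congr (Equiv.sumCompl fun L : SortedPartition n => IsFlush k L.parts)
  rw [Nat.card_sum, card_sortedPartition] at h
  rw [flushCount, ← h]
  push_cast
  ring

noncomputable def flushEquiv (k n : ℕ) (h : k + 1 ≤ n) :
    {L : SortedPartition n // IsFlush k L.parts} ≃
      {M : SortedPartition (n - (k + 1)) // ¬ IsFlush (k + 1) M.parts} where
  toFun L :=
    have hL := (isFlush_iff L.1.sorted).1 L.2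
    have hsorted := hL.pairwise_eraseRowAddCol L.1.sorted
    ⟨⟨eraseRowAddCol (durfeeRect k L.1.parts) L.1.parts, hsorted, pos_eraseRowAddCol L.1.pos, by
        have := sum_eraseRowAddCol hL.1 hL.le_length
        have := L.1.sum_eq
        obtain ⟨hd1, hrow, -⟩ := hL
        omega⟩,
      (hL.isOverhangAt_eraseRowAddCol L.1.sorted).not_isFlush hsorted⟩
  invFun M :=
    have hM := (not_isFlush_iff M.1.sorted).1 M.2
    ⟨⟨insertRowEraseCol (durfeeRect (k + 1) M.1.parts + 1 + k) (durfeeRect (k + 1) M.1.parts)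
        M.1.parts, hM.pairwise_insertRowEraseCol M.1.sorted,
        hM.pos_insertRowEraseCol M.1.sorted M.1.pos, by
        have := sum_insertRowEraseCol (r := durfeeRect (k + 1) M.1.parts + 1 + k) M.1.pos
          hM.le_length
        have := M.1.sum_eq
        omega⟩,
      ⟨_, hM.isFlushAt_insertRowEraseCol⟩⟩
  left_inv L := by
    have hL := (isFlush_iff L.1.sorted).1 L.2
    refine Subtype.ext <| SortedPartition.ext ?_
    dsimp only
    rw [(hL.isOverhangAt_eraseRowAddCol L.1.sorted).durfeeRect_eq
        (hL.pairwise_eraseRowAddCol L.1.sorted), Nat.sub_add_cancel hL.1, ← hL.2.1]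
    exact insertRowEraseCol_eraseRowAddCol hL.1 hL.le_length
  right_inv M := by
    have hM := (not_isFlush_iff M.1.sorted).1 M.2
    refine Subtype.ext <| SortedPartition.ext ?_
    dsimp only
    rw [hM.isFlushAt_insertRowEraseCol.durfeeRect_eq (hM.pairwise_insertRowEraseCol M.1.sorted),
      eraseRowAddCol_insertRowEraseCol M.1.pos hM.le_length]

theorem flushCount_of_le {k n : ℕ} (h : n ≤ k) : flushCount k n = 0 := by
  rw [flushCount, Nat.card_eq_zero]
  refine Or.inl ⟨?_⟩
  rintro ⟨L, d, hd1, hrow, -⟩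
  have := row_le_sum (L := L.parts) (i := d)
  have := L.sum_eq
  omega

theorem flushCount_eq_sub {k n : ℕ} (h : k + 1 ≤ n) :
    (flushCount k n : ℤ) =
      Fintype.card (n - (k + 1)).Partition - flushCount (k + 1) (n - (k + 1)) := by
  rw [flushCount, Nat.card_congr (flushEquiv k n h), card_not_isFlush]

def altTerm (k n j : ℕ) : ℤ :=
  if j * k + j * (j + 1) / 2 ≤ n then
    (-1) ^ j * Fintype.card (n - (j * k + j * (j + 1) / 2)).Partition
  else 0

def altSum (k n : ℕ) : ℤ :=
  ∑ j ∈ Finset.range (n + 1), altTerm k n j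

theorem le_triangle (j : ℕ) : j ≤ j * (j + 1) / 2 := by
  rw [Nat.le_div_iff_mul_le two_pos]
  rcases j with _ | j
  · rfl
  · nlinarith

theorem triangle_succ (j : ℕ) : (j + 1) * (j + 1 + 1) / 2 = j * (j + 1) / 2 + (j + 1) := by
  rw [show (j + 1) * (j + 1 + 1) = j * (j + 1) + (j + 1) * 2 by ring,
    Nat.add_mul_div_right _ _ two_pos]

theorem altTerm_zero (k n : ℕ) : altTerm k n 0 = Fintype.card n.Partition := by
  simp [altTerm]

theorem altTerm_of_lt {k n j : ℕ} (h : n < j) : altTerm k n j = 0 :=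
  if_neg (by have := le_triangle j; omega)

theorem altTerm_succ {k n : ℕ} (h : k + 1 ≤ n) (j : ℕ) :
    altTerm k n (j + 1) = -altTerm (k + 1) (n - (k + 1)) j := by
  have hkey : (j + 1) * k + (j + 1) * (j + 1 + 1) / 2 =
      (k + 1) + (j * (k + 1) + j * (j + 1) / 2) := by
    rw [triangle_succ]
    ring
  rw [altTerm, altTerm, hkey]
  by_cases hj : j * (k + 1) + j * (j + 1) / 2 ≤ n - (k + 1)
  · rw [if_pos (by omega), if_pos hj, pow_succ, Nat.sub_add_eq]
    ring
  · rw [if_neg (by omega), if_neg hj, neg_zero]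

theorem altSum_eq_sum_range {k n N : ℕ} (h : n < N) :
    altSum k n = ∑ j ∈ Finset.range N, altTerm k n j :=
  Finset.sum_subset (Finset.range_subset_range.2 h) fun j _ hj =>
    altTerm_of_lt (by simpa using hj)

theorem altSum_of_le {k n : ℕ} (h : n ≤ k) : altSum k n = Fintype.card n.Partition := by
  refine (Finset.sum_eq_single_of_mem 0 (by simp) fun j _ hj => if_neg ?_).trans (altTerm_zero k n)
  have := le_triangle j
  have := Nat.le_mul_of_pos_left k (Nat.pos_of_ne_zero hj)
  omega

theorem altSum_eq_sub {k n : ℕ} (h : k + 1 ≤ n) :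
    altSum k n = Fintype.card n.Partition - altSum (k + 1) (n - (k + 1)) := by
  rw [altSum, Finset.sum_range_succ', altSum_eq_sum_range (show n - (k + 1) < n by omega),
    altTerm_zero]
  simp only [altTerm_succ h, Finset.sum_neg_distrib]
  ring

theorem flushCount_eq (n k : ℕ) :
    (flushCount k n : ℤ) = Fintype.card n.Partition - altSum k n := by
  induction n using Nat.strong_induction_on generalizing k with
  | _ n ih =>
    rcases le_or_gt (k + 1) n with h | h
    · rw [flushCount_eq_sub h, ih _ (by omega), altSum_eq_sub h]
      ring
    · rw [flushCount_of_le (by omega), altSum_of_le (by omega)]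
      simp

end Durfee

open Durfee in
theorem stmt8 (n : ℕ) (hn : 1 ≤ n) :
    (Nat.card {l : n.Partition // l.durfee < l.nthPart l.durfee} : ℤ) =
      ∑ j ∈ (Finset.range (n + 1)).filter (fun j => j * (j + 1) / 2 ≤ n),
        (-1) ^ j * (Fintype.card (Nat.Partition (n - j * (j + 1) / 2)) : ℤ) := by
  -- `l.durfee` and `l.nthPart` unfold to `durfeeRect 0` and `row` of the sorted parts.
  have hequiv : {l : n.Partition // l.durfee < l.nthPart l.durfee} ≃
      {L : SortedPartition n // ¬ IsFlush 0 L.parts} :=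
    (sortedPartitionEquiv n).subtypeEquiv fun l =>
      durfeeRect_add_lt_row_iff (sortedPartitionEquiv n l).sorted
        ((sortedPartitionEquiv n l).row_one_pos hn)
  rw [Nat.card_congr hequiv, card_not_isFlush, flushCount_eq, sub_sub_cancel, altSum,
    Finset.sum_filter]
  simp [altTerm]
end

section
/- For every integer n ≥ 1, the number of unflushed partitions of n with an odd number of parts equals the number of unflushed partitions of n with an even number of parts. -/
/-- A partition is *flushed* if the least positive integer occurring an even
number of times among its parts (zero occurrences count as even) is even. -/
def Nat.Partition.Flushed {n : ℕ} (l : n.Partition) : Prop :=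
  Even (sInf {k : ℕ | 0 < k ∧ Even (l.parts.count k)})

open Multiset Finset

attribute [local instance] Classical.propDecidable

namespace Flushtest


/-- add a part `r` to a partition of `n - r`, getting a partition of `n`. -/
def addPart (r n : ℕ) (hr : 1 ≤ r) (hrn : r ≤ n) (m : (n - r).Partition) : n.Partition :=
  ⟨r ::ₘ m.parts, fun hi => by
      rcases Multiset.mem_cons.mp hi with h | h
      · omega
      · exact m.parts_pos h, by rw [Multiset.sum_cons, m.parts_sum]; omega⟩

theorem master (r n : ℕ) (hr : 1 ≤ r) (hrn : r ≤ n) (G : Multiset ℕ → ℤ) :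
    ∑ l : n.Partition, (if r ∈ l.parts then G (l.parts.erase r) else 0)
      = ∑ m : (n - r).Partition, G m.parts := by
  rw [Finset.sum_ite, Finset.sum_const_zero, add_zero]
  refine Finset.sum_bij' (i := fun (l : n.Partition) (hl : l ∈ Finset.univ.filter fun l => r ∈ l.parts) =>
      (⟨l.parts.erase r, fun hi => l.parts_pos (Multiset.mem_of_mem_erase hi), by
        have hm : r ∈ l.parts := (Finset.mem_filter.mp hl).2
        have h1 := Multiset.cons_erase hm
        have h2 : (r ::ₘ l.parts.erase r).sum = n := by rw [h1, l.parts_sum]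
        rw [Multiset.sum_cons] at h2
        omega⟩ : (n - r).Partition))
    (j := fun (m : (n - r).Partition) _ => addPart r n hr hrn m)
    ?_ ?_ ?_ ?_ ?_
  · intro a ha; exact Finset.mem_univ _
  · intro a ha
    simp only [Finset.mem_filter, Finset.mem_univ, true_and, addPart]
    exact Multiset.mem_cons_self _ _
  · intro a ha
    have hm : r ∈ a.parts := (Finset.mem_filter.mp ha).2
    apply Nat.Partition.ext
    simp [addPart, Multiset.cons_erase hm]
  · intro a ha
    apply Nat.Partition.ext
    simp [addPart, Multiset.erase_cons_head]
  · intro a ha; rfl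



/-- least `k ≥ r` such that `k` occurs an even number of times in `s` -/
noncomputable def mm (r : ℕ) (s : Multiset ℕ) : ℕ := sInf {k | r ≤ k ∧ Even (s.count k)}

lemma mem_le_sum {s : Multiset ℕ} {k : ℕ} (h : k ∈ s) : k ≤ s.sum :=
  Multiset.single_le_sum (fun x _ => Nat.zero_le x) k h

lemma mm_set_nonempty (r : ℕ) (s : Multiset ℕ) :
    {k | r ≤ k ∧ Even (s.count k)}.Nonempty := by
  refine ⟨max r (s.sum + 1), le_max_left _ _, ?_⟩
  have h0 : s.count (max r (s.sum + 1)) = 0 := by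
    rw [Multiset.count_eq_zero]
    intro hmem
    have := mem_le_sum hmem
    have := le_max_right r (s.sum + 1)
    omega
  simp [h0]

lemma mm_spec (r : ℕ) (s : Multiset ℕ) : r ≤ mm r s ∧ Even (s.count (mm r s)) :=
  Nat.sInf_mem (mm_set_nonempty r s)

lemma mm_le {r k : ℕ} {s : Multiset ℕ} (h : r ≤ k) (he : Even (s.count k)) :
    mm r s ≤ k := Nat.sInf_le ⟨h, he⟩

/-- the least `k ≥ r` with even count has the same parity as `r` -/
noncomputable def P (r : ℕ) (s : Multiset ℕ) : Prop := Even (mm r s - r)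

lemma mm_eq_self {r : ℕ} {s : Multiset ℕ} (he : Even (s.count r)) : mm r s = r :=
  le_antisymm (mm_le le_rfl he) (mm_spec r s).1

lemma P_of_even {r : ℕ} {s : Multiset ℕ} (he : Even (s.count r)) : P r s := by
  rw [P, mm_eq_self he]; simp

lemma mm_succ {r : ℕ} {s : Multiset ℕ} (ho : Odd (s.count r)) :
    mm r s = mm (r + 1) s := by
  unfold mm
  congr 1
  ext k
  simp only [Set.mem_setOf_eq]
  constructor
  · rintro ⟨h1, h2⟩
    refine ⟨?_, h2⟩
    rcases Nat.eq_or_lt_of_le h1 with h | h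
    · exfalso; rw [← h] at h2; exact (Nat.not_even_iff_odd.mpr ho) h2
    · omega
  · rintro ⟨h1, h2⟩; exact ⟨by omega, h2⟩

lemma P_odd_iff {r : ℕ} {s : Multiset ℕ} (ho : Odd (s.count r)) :
    P r s ↔ ¬ P (r + 1) s := by
  have h1 : mm r s = mm (r + 1) s := mm_succ ho
  have h2 : r + 1 ≤ mm (r + 1) s := (mm_spec (r + 1) s).1
  unfold P
  rw [h1]
  have h3 : mm (r + 1) s - r = (mm (r + 1) s - (r + 1)) + 1 := by omega
  rw [h3, Nat.even_add_one]

lemma P_cons {r t : ℕ} (ht : t ≤ r) (s : Multiset ℕ) :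
    P (r + 1) (t ::ₘ s) ↔ P (r + 1) s := by
  have hset : {k | r + 1 ≤ k ∧ Even ((t ::ₘ s).count k)} = {k | r + 1 ≤ k ∧ Even (s.count k)} := by
    ext k
    simp only [Set.mem_setOf_eq]
    have : ∀ (hk : r + 1 ≤ k), (t ::ₘ s).count k = s.count k := fun hk => by
      rw [Multiset.count_cons_of_ne]; omega
    constructor
    · rintro ⟨h1, h2⟩; rw [this h1] at h2; exact ⟨h1, h2⟩
    · rintro ⟨h1, h2⟩; rw [← this h1] at h2; exact ⟨h1, h2⟩
  unfold P mm
  rw [hset]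



noncomputable def sg (s : Multiset ℕ) : ℤ := (-1) ^ (Multiset.card s)

noncomputable def A (n : ℕ) : ℤ := ∑ l : n.Partition, sg l.parts
noncomputable def F (r n : ℕ) : ℤ := ∑ l : n.Partition, if P r l.parts then sg l.parts else 0
noncomputable def gg (r n : ℕ) : ℤ :=
  ∑ l : n.Partition, if Odd (l.parts.count r) ∧ P (r + 1) l.parts then sg l.parts else 0

lemma split_F (r n : ℕ) : F r n = A n - gg r n := by
  unfold F A gg
  rw [← Finset.sum_sub_distrib]
  apply Finset.sum_congr rfl
  intro l _
  rcases Nat.even_or_odd (l.parts.count r) with he | ho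
  · have h1 : P r l.parts := P_of_even he
    have h2 : ¬ (Odd (l.parts.count r) ∧ P (r + 1) l.parts) := by
      rintro ⟨h, _⟩; exact (Nat.not_odd_iff_even.mpr he) h
    simp [h1, h2]
  · have h1 : P r l.parts ↔ ¬ P (r + 1) l.parts := P_odd_iff ho
    by_cases h2 : P (r + 1) l.parts
    · simp [h1.not_left, h2, ho, h1]
    · have : P r l.parts := h1.mpr h2
      simp [this, h2]

noncomputable def GG (r : ℕ) (e : Multiset ℕ) : ℤ :=
  if Even (e.count r) ∧ P (r + 1) e then -((-1 : ℤ) ^ (Multiset.card e)) else 0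

lemma gg_eq (r n : ℕ) (hr : 1 ≤ r) (hrn : r ≤ n) :
    gg r n = -(F (r + 1) (n - r)) + gg r (n - r) := by
  have key : gg r n = ∑ l : n.Partition, (if r ∈ l.parts then
      GG r (l.parts.erase r) else 0) := by
    unfold gg
    apply Finset.sum_congr rfl
    intro l _
    by_cases hm : r ∈ l.parts
    · have hc := Multiset.cons_erase hm
      have hcount : l.parts.count r = (l.parts.erase r).count r + 1 := by
        conv_lhs => rw [← hc]
        rw [Multiset.count_cons_self]
      have hodd : Odd (l.parts.count r) ↔ Even ((l.parts.erase r).count r) := by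
        rw [hcount]; rw [Nat.odd_add_one, Nat.not_odd_iff_even]
      have hP : P (r + 1) l.parts ↔ P (r + 1) (l.parts.erase r) := by
        conv_lhs => rw [← hc]
        exact P_cons le_rfl _
      have hcard : Multiset.card l.parts = Multiset.card (l.parts.erase r) + 1 := by
        conv_lhs => rw [← hc]; rw [Multiset.card_cons]
      simp only [hm, if_true]
      have hsg : sg l.parts = -((-1 : ℤ) ^ (Multiset.card (l.parts.erase r))) := by
        rw [sg, hcard]; ring
      rw [GG]
      exact if_congr (and_congr hodd hP) hsg rfl
    · have hc : l.parts.count r = 0 := Multiset.count_eq_zero.mpr hm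
      have : ¬ Odd (l.parts.count r) := by rw [hc]; simp
      simp [hm, this]
  have key2 : gg r n = ∑ m : (n - r).Partition, GG r m.parts :=
    key.trans (master r n hr hrn (GG r))
  rw [key2]
  have expand : ∀ m : (n - r).Partition, GG r m.parts
      = -((if P (r + 1) m.parts then sg m.parts else 0)
          - (if Odd (m.parts.count r) ∧ P (r + 1) m.parts then sg m.parts else 0)) := by
    intro m
    rw [GG]
    rcases Nat.even_or_odd (m.parts.count r) with he | ho
    · have hno : ¬ Odd (m.parts.count r) := Nat.not_odd_iff_even.mpr he
      by_cases hP : P (r + 1) m.parts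
      · simp [he, hP, hno, sg]
      · simp [hP, hno]
    · have hne : ¬ Even (m.parts.count r) := Nat.not_even_iff_odd.mpr ho
      by_cases hP : P (r + 1) m.parts
      · simp [hne, hP, ho]
      · simp [hne, hP, ho]
  rw [Finset.sum_congr rfl (fun m _ => expand m)]
  rw [Finset.sum_neg_distrib, Finset.sum_sub_distrib]
  unfold F gg
  ring

lemma F_base (r n : ℕ) (h : n < r) : F r n = A n := by
  unfold F A
  apply Finset.sum_congr rfl
  intro l _
  have hm : r ∉ l.parts := by
    intro hmem
    have := mem_le_sum hmem
    rw [l.parts_sum] at this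
    omega
  have : P r l.parts := P_of_even (by rw [Multiset.count_eq_zero.mpr hm]; simp)
  simp [this]

lemma F_rec (r n : ℕ) (hr : 1 ≤ r) (hrn : r ≤ n) :
    F r n = A n + F (r + 1) (n - r) - A (n - r) + F r (n - r) := by
  have h1 := split_F r n
  have h2 := gg_eq r n hr hrn
  have h3 := split_F r (n - r)
  -- gg r (n-r) = A (n-r) - F r (n-r)
  have h4 : gg r (n - r) = A (n - r) - F r (n - r) := by omega
  rw [h1, h2, h4]
  ring



/-- support of `s` is `{r, r+1, ..., j}` for some `j`, or empty; all parts `≥ r`. -/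
def IF (r : ℕ) (s : Multiset ℕ) : Prop :=
  (∀ j ∈ s, r ≤ j) ∧ (∀ i j : ℕ, r ≤ i → i ≤ j → j ∈ s → i ∈ s)

/-- support of `s` is exactly `{1, ..., R}` -/
def ES (R : ℕ) (s : Multiset ℕ) : Prop :=
  (∀ j ∈ s, j ≤ R) ∧ (∀ i : ℕ, 1 ≤ i → i ≤ R → i ∈ s)

noncomputable def Ab (R n : ℕ) : ℤ :=
  ∑ l : n.Partition, if (∀ j ∈ l.parts, j ≤ R) then sg l.parts else 0

noncomputable def N (r k : ℕ) : ℤ := ∑ l : k.Partition, if IF r l.parts then 1 else 0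
noncomputable def u (R k : ℕ) : ℤ := ∑ l : k.Partition, if ES R l.parts then 1 else 0
noncomputable def v (R k : ℕ) : ℤ :=
  ∑ l : k.Partition, if l.parts.Nodup ∧ Multiset.card l.parts = R then 1 else 0
noncomputable def d (k : ℕ) : ℤ := ∑ l : k.Partition, if l.parts.Nodup then 1 else 0
noncomputable def db (R k : ℕ) : ℤ :=
  ∑ l : k.Partition, if l.parts.Nodup ∧ (∀ j ∈ l.parts, j ≤ R) then 1 else 0
/-- generic split of a sum over partitions according to membership of `R` -/
lemma split_mem (R n : ℕ) (f : Multiset ℕ → ℤ) :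
    ∑ l : n.Partition, f l.parts
      = (∑ l : n.Partition, if R ∈ l.parts then f l.parts else 0)
        + ∑ l : n.Partition, if R ∉ l.parts then f l.parts else 0 := by
  rw [← Finset.sum_add_distrib]
  apply Finset.sum_congr rfl
  intro l _
  by_cases h : R ∈ l.parts <;> simp [h]

lemma IF_cons (r : ℕ) (e : Multiset ℕ) :
    IF r (r ::ₘ e) ↔ ((r ∈ e ∧ IF r e) ∨ (r ∉ e ∧ IF (r + 1) e)) := by
  constructor
  · rintro ⟨hb, hd⟩
    by_cases hre : r ∈ e
    · refine Or.inl ⟨hre, fun j hj => hb j (mem_cons_of_mem hj), fun i j hi hij hj => ?_⟩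
      have := hd i j hi hij (mem_cons_of_mem hj)
      rcases mem_cons.mp this with h | h
      · rwa [h]
      · exact h
    · refine Or.inr ⟨hre, fun j hj => ?_, fun i j hi hij hj => ?_⟩
      · have := hb j (mem_cons_of_mem hj)
        rcases Nat.eq_or_lt_of_le this with h | h
        · exfalso; rw [← h] at hj; exact hre hj
        · omega
      · have := hd i j (by omega) hij (mem_cons_of_mem hj)
        rcases mem_cons.mp this with h | h
        · omega
        · exact h
  · rintro (⟨hre, hb, hd⟩ | ⟨hre, hb, hd⟩)
    · refine ⟨fun j hj => ?_, fun i j hi hij hj => ?_⟩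
      · rcases mem_cons.mp hj with h | h
        · omega
        · exact hb j h
      · rcases mem_cons.mp hj with h | h
        · subst h
          have : i = j := by omega
          subst this; exact mem_cons_self _ _
        · exact mem_cons_of_mem (hd i j hi hij h)
    · refine ⟨fun j hj => ?_, fun i j hi hij hj => ?_⟩
      · rcases mem_cons.mp hj with h | h
        · omega
        · have := hb j h; omega
      · rcases Nat.eq_or_lt_of_le hi with h | h
        · rw [← h]; exact mem_cons_self _ _
        · rcases mem_cons.mp hj with h2 | h2
          · omega
          · exact mem_cons_of_mem (hd i j (by omega) hij h2)

lemma IF_zero (r : ℕ) : IF r (0 : Multiset ℕ) := ⟨by simp, by simp⟩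

lemma IF_nonempty_mem {r : ℕ} {s : Multiset ℕ} (h : IF r s) (hs : s ≠ 0) : r ∈ s := by
  obtain ⟨j, hj⟩ := Multiset.exists_mem_of_ne_zero hs
  exact h.2 r j le_rfl (h.1 j hj) hj

lemma IF_ge {r : ℕ} {s : Multiset ℕ} (h : IF (r + 1) s) : r ∉ s := fun hm => by
  have := h.1 r hm; omega

noncomputable def GN (r : ℕ) (e : Multiset ℕ) : ℤ :=
  if IF r e ∨ (r ∉ e ∧ IF (r + 1) e) then 1 else 0

lemma N_rec (r k : ℕ) (hr : 1 ≤ r) (hrk : r ≤ k) :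
    N r k = N r (k - r) + N (r + 1) (k - r) - (if k = r then 1 else 0) := by
  have key : N r k = ∑ l : k.Partition,
      (if r ∈ l.parts then GN r (l.parts.erase r) else 0) := by
    unfold N
    apply Finset.sum_congr rfl
    intro l _
    by_cases hm : r ∈ l.parts
    · have hc := Multiset.cons_erase hm
      simp only [hm, if_true, GN]
      have hiff : IF r l.parts ↔ ((r ∈ l.parts.erase r ∧ IF r (l.parts.erase r))
          ∨ (r ∉ l.parts.erase r ∧ IF (r + 1) (l.parts.erase r))) := by
        conv_lhs => rw [← hc]
        exact IF_cons r _
      refine if_congr (hiff.trans ?_) rfl rfl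
      constructor
      · rintro (⟨h1, h2⟩ | h); exacts [Or.inl h2, Or.inr h]
      · rintro (h | h)
        · by_cases hre : r ∈ l.parts.erase r
          · exact Or.inl ⟨hre, h⟩
          · refine Or.inr ⟨hre, ?_, ?_⟩
            · intro j hj
              have := h.1 j hj
              rcases Nat.eq_or_lt_of_le this with h' | h'
              · exfalso; rw [← h'] at hj; exact hre hj
              · omega
            · intro i j hi hij hj
              exact h.2 i j (by omega) hij hj
        · exact Or.inr h
    · -- r ∉ parts: IF r parts fails since parts nonempty
      have hne : l.parts ≠ 0 := by
        intro h0
        have := l.parts_sum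
        rw [h0] at this
        simp at this
        omega
      have : ¬ IF r l.parts := fun h => hm (IF_nonempty_mem h hne)
      simp [hm, this]
  have key2 : N r k = ∑ m : (k - r).Partition, GN r m.parts :=
    key.trans (master r k hr hrk (GN r))
  rw [key2]
  have expand : ∀ m : (k - r).Partition, GN r m.parts
      = (if IF r m.parts then 1 else 0) + (if IF (r+1) m.parts then 1 else 0)
        - (if m.parts = 0 then 1 else 0) := by
    intro m
    rw [GN]
    by_cases h1 : IF r m.parts
    · by_cases h0 : m.parts = 0
      · simp [h0, IF_zero]
      · have h2 : ¬ IF (r + 1) m.parts := by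
          intro h
          exact IF_ge h (IF_nonempty_mem h1 h0)
        simp [h1, h2, h0]
    · by_cases h2 : IF (r + 1) m.parts
      · have h0 : m.parts ≠ 0 := by
          intro h0
          apply h1; rw [h0]; exact ⟨by simp, by simp⟩
        have hm : r ∉ m.parts := IF_ge h2
        simp [h1, h2, h0, hm]
      · have : ¬ (IF r m.parts ∨ (r ∉ m.parts ∧ IF (r + 1) m.parts)) := by
          rintro (h | ⟨_, h⟩); exacts [h1 h, h2 h]
        have h0 : m.parts ≠ 0 := by
          intro h0
          apply h1; rw [h0]; exact ⟨by simp, by simp⟩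
        simp [this, h1, h2, h0]
  rw [Finset.sum_congr rfl (fun m _ => expand m), Finset.sum_sub_distrib, Finset.sum_add_distrib]
  unfold N
  congr 1
  have hpz : ∀ m : (k - r).Partition, (if m.parts = 0 then (1:ℤ) else 0) = (if k = r then 1 else 0) := by
    intro m
    by_cases hk : k = r
    · have hs : m.parts.sum = 0 := by have := m.parts_sum; omega
      have h0 : m.parts = 0 := by
        by_contra hne
        obtain ⟨j, hj⟩ := Multiset.exists_mem_of_ne_zero hne
        have h1 := m.parts_pos hj
        have h2 := mem_le_sum hj
        omega
      simp [h0, hk]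
    · have h0 : m.parts ≠ 0 := by
        intro h0
        have := m.parts_sum
        rw [h0] at this
        simp at this
        omega
      simp [h0, hk]
  rw [Finset.sum_congr rfl (fun m _ => hpz m), Finset.sum_const]
  by_cases hk : k = r
  · rw [if_pos hk]
    have h0 : k - r = 0 := by omega
    rw [Finset.card_univ, h0]
    have : Fintype.card (Nat.Partition 0) = 1 := Fintype.card_unique
    rw [this]
    simp
  · rw [if_neg hk]
    simp


lemma ES_mem {R : ℕ} {s : Multiset ℕ} (hR : 1 ≤ R) (h : ES R s) : R ∈ s :=
  h.2 R hR le_rfl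

lemma ES_cons {R : ℕ} (hR : 1 ≤ R) (e : Multiset ℕ) :
    ES R (R ::ₘ e) ↔ (ES R e ∨ ES (R - 1) e) := by
  constructor
  · rintro ⟨hb, hm⟩
    have hsub : ∀ i : ℕ, 1 ≤ i → i ≤ R - 1 → i ∈ e := by
      intro i h1 h2
      have := hm i h1 (by omega)
      rcases mem_cons.mp this with h | h
      · omega
      · exact h
    by_cases hRe : R ∈ e
    · refine Or.inl ⟨fun j hj => hb j (mem_cons_of_mem hj), fun i h1 h2 => ?_⟩
      rcases Nat.eq_or_lt_of_le h2 with h | h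
      · rwa [h]
      · exact hsub i h1 (by omega)
    · refine Or.inr ⟨fun j hj => ?_, hsub⟩
      have := hb j (mem_cons_of_mem hj)
      rcases Nat.eq_or_lt_of_le this with h | h
      · exfalso; rw [← h] at hRe; exact hRe hj
      · omega
  · rintro (⟨hb, hm⟩ | ⟨hb, hm⟩)
    · refine ⟨fun j hj => ?_, fun i h1 h2 => mem_cons_of_mem (hm i h1 h2)⟩
      rcases mem_cons.mp hj with h | h
      · omega
      · exact hb j h
    · refine ⟨fun j hj => ?_, fun i h1 h2 => ?_⟩
      · rcases mem_cons.mp hj with h | h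
        · omega
        · have := hb j h; omega
      · rcases Nat.eq_or_lt_of_le h2 with h | h
        · rw [h]; exact mem_cons_self _ _
        · exact mem_cons_of_mem (hm i h1 (by omega))

lemma ES_pred_not_mem {R : ℕ} {s : Multiset ℕ} (hR : 1 ≤ R) (h : ES (R - 1) s) :
    R ∉ s := fun hm => by have := h.1 R hm; omega

noncomputable def GU (R : ℕ) (e : Multiset ℕ) : ℤ :=
  if ES R e ∨ ES (R - 1) e then 1 else 0

lemma u_rec (R k : ℕ) (hR : 1 ≤ R) (hRk : R ≤ k) :
    u R k = u R (k - R) + u (R - 1) (k - R) := by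
  have key : u R k = ∑ l : k.Partition,
      (if R ∈ l.parts then GU R (l.parts.erase R) else 0) := by
    unfold u
    apply Finset.sum_congr rfl
    intro l _
    by_cases hm : R ∈ l.parts
    · have hc := Multiset.cons_erase hm
      simp only [hm, if_true, GU]
      refine if_congr ?_ rfl rfl
      conv_lhs => rw [← hc]
      exact ES_cons hR _
    · have : ¬ ES R l.parts := fun h => hm (ES_mem hR h)
      simp [hm, this]
  have key2 : u R k = ∑ m : (k - R).Partition, GU R m.parts :=
    key.trans (master R k hR hRk (GU R))
  rw [key2]
  have expand : ∀ m : (k - R).Partition, GU R m.parts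
      = (if ES R m.parts then (1:ℤ) else 0) + (if ES (R - 1) m.parts then 1 else 0) := by
    intro m
    rw [GU]
    by_cases h1 : ES R m.parts
    · have h2 : ¬ ES (R - 1) m.parts := fun h => (ES_pred_not_mem hR h) (ES_mem hR h1)
      simp [h1, h2]
    · by_cases h2 : ES (R - 1) m.parts
      · simp [h1, h2]
      · simp [h1, h2]
  rw [Finset.sum_congr rfl (fun m _ => expand m), Finset.sum_add_distrib]
  rfl

noncomputable def GDB (R : ℕ) (e : Multiset ℕ) : ℤ :=
  if e.Nodup ∧ (∀ j ∈ e, j ≤ R - 1) then 1 else 0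

lemma db_rec (R k : ℕ) (hR : 1 ≤ R) (hRk : R ≤ k) :
    db R k = db (R - 1) k + db (R - 1) (k - R) := by
  have hsplit := split_mem R k
    (fun s => if s.Nodup ∧ (∀ j ∈ s, j ≤ R) then (1:ℤ) else 0)
  have e1 : (∑ l : k.Partition, if R ∉ l.parts then
      (if l.parts.Nodup ∧ (∀ j ∈ l.parts, j ≤ R) then (1:ℤ) else 0) else 0)
      = db (R - 1) k := by
    unfold db
    apply Finset.sum_congr rfl
    intro l _
    by_cases hm : R ∈ l.parts
    · have : ¬ (l.parts.Nodup ∧ ∀ j ∈ l.parts, j ≤ R - 1) := by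
        rintro ⟨_, h⟩; have := h R hm; omega
      simp [hm, this]
    · simp only [hm, not_false_iff, if_true]
      refine if_congr (and_congr Iff.rfl ?_) rfl rfl
      constructor
      · intro h j hj
        have h1 := h j hj
        have h2 : j ≠ R := fun he => hm (he ▸ hj)
        omega
      · intro h j hj
        have := h j hj; omega
  have e2 : (∑ l : k.Partition, if R ∈ l.parts then
      (if l.parts.Nodup ∧ (∀ j ∈ l.parts, j ≤ R) then (1:ℤ) else 0) else 0)
      = db (R - 1) (k - R) := by
    have key : (∑ l : k.Partition, if R ∈ l.parts then
        (if l.parts.Nodup ∧ (∀ j ∈ l.parts, j ≤ R) then (1:ℤ) else 0) else 0)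
        = ∑ l : k.Partition, (if R ∈ l.parts then GDB R (l.parts.erase R) else 0) := by
      apply Finset.sum_congr rfl
      intro l _
      by_cases hm : R ∈ l.parts
      · have hc := Multiset.cons_erase hm
        simp only [hm, if_true, GDB]
        refine if_congr ?_ rfl rfl
        constructor
        · rintro ⟨hnd, hb⟩
          rw [← hc] at hnd
          have h1 := (Multiset.nodup_cons.mp hnd)
          refine ⟨h1.2, fun j hj => ?_⟩
          have hb2 := hb j (Multiset.mem_of_mem_erase hj)
          have : j ≠ R := fun he => h1.1 (he ▸ hj)
          omega
        · rintro ⟨hnd, hb⟩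
          constructor
          · rw [← hc]
            rw [Multiset.nodup_cons]
            exact ⟨fun hmem => by have := hb R hmem; omega, hnd⟩
          · intro j hj
            rw [← hc] at hj
            rcases mem_cons.mp hj with h | h
            · omega
            · have := hb j h; omega
      · simp [hm]
    rw [key, key.symm.trans (key.trans (master R k hR hRk (GDB R)))]
    rfl
  rw [db, hsplit, e1, e2]
  ring

noncomputable def GA (R : ℕ) (e : Multiset ℕ) : ℤ :=
  if (∀ j ∈ e, j ≤ R) then -(sg e) else 0

lemma Ab_rec (R n : ℕ) (hR : 1 ≤ R) (hRn : R ≤ n) :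
    Ab R n = Ab (R - 1) n - Ab R (n - R) := by
  have hsplit := split_mem R n (fun s => if (∀ j ∈ s, j ≤ R) then sg s else 0)
  have e1 : (∑ l : n.Partition, if R ∉ l.parts then
      (if (∀ j ∈ l.parts, j ≤ R) then sg l.parts else 0) else 0) = Ab (R - 1) n := by
    unfold Ab
    apply Finset.sum_congr rfl
    intro l _
    by_cases hm : R ∈ l.parts
    · have : ¬ (∀ j ∈ l.parts, j ≤ R - 1) := fun h => by have := h R hm; omega
      simp [hm, this]
    · simp only [hm, not_false_iff, if_true]
      refine if_congr ?_ rfl rfl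
      constructor
      · intro h j hj
        have h1 := h j hj
        have h2 : j ≠ R := fun he => hm (he ▸ hj)
        omega
      · intro h j hj
        have := h j hj; omega
  have e2 : (∑ l : n.Partition, if R ∈ l.parts then
      (if (∀ j ∈ l.parts, j ≤ R) then sg l.parts else 0) else 0) = - Ab R (n - R) := by
    have key : (∑ l : n.Partition, if R ∈ l.parts then
        (if (∀ j ∈ l.parts, j ≤ R) then sg l.parts else 0) else 0)
        = ∑ l : n.Partition, (if R ∈ l.parts then GA R (l.parts.erase R) else 0) := by
      apply Finset.sum_congr rfl
      intro l _
      by_cases hm : R ∈ l.parts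
      · have hc := Multiset.cons_erase hm
        simp only [hm, if_true, GA]
        have hbnd : (∀ j ∈ l.parts, j ≤ R) ↔ (∀ j ∈ l.parts.erase R, j ≤ R) := by
          constructor
          · intro h j hj; exact h j (Multiset.mem_of_mem_erase hj)
          · intro h j hj
            rw [← hc] at hj
            rcases mem_cons.mp hj with h' | h'
            · omega
            · exact h j h'
        have hsg : sg l.parts = -(sg (l.parts.erase R)) := by
          have : Multiset.card l.parts = Multiset.card (l.parts.erase R) + 1 := by
            conv_lhs => rw [← hc]; rw [Multiset.card_cons]
          rw [sg, sg, this]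
          ring
        exact if_congr hbnd hsg rfl
      · simp [hm]
    rw [key, key.symm.trans (key.trans (master R n hR hRn (GA R)))]
    unfold Ab GA
    rw [← Finset.sum_neg_distrib]
    apply Finset.sum_congr rfl
    intro m _
    by_cases h : ∀ j ∈ m.parts, j ≤ R
    · rw [if_pos h, if_pos h]
    · rw [if_neg h, if_neg h]; ring
  rw [Ab, hsplit, e1, e2]
  ring

lemma card_le_sum {s : Multiset ℕ} (h : ∀ x ∈ s, 1 ≤ x) : Multiset.card s ≤ s.sum := by
  induction s using Multiset.induction_on with
  | empty => simp
  | cons a s ih =>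
    rw [Multiset.card_cons, Multiset.sum_cons]
    have h1 : 1 ≤ a := h a (mem_cons_self _ _)
    have h2 := ih (fun x hx => h x (mem_cons_of_mem hx))
    omega

lemma parts_eq_zero_iff {k : ℕ} (m : k.Partition) : m.parts = 0 ↔ k = 0 := by
  constructor
  · intro h0
    have := m.parts_sum
    rw [h0] at this
    simpa using this.symm
  · intro h
    by_contra hne
    obtain ⟨j, hj⟩ := Multiset.exists_mem_of_ne_zero hne
    have h1 := m.parts_pos hj
    have h2 := mem_le_sum hj
    rw [m.parts_sum] at h2
    omega

lemma part_le {k : ℕ} (m : k.Partition) {j : ℕ} (hj : j ∈ m.parts) : j ≤ k := by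
  have := mem_le_sum hj
  rwa [m.parts_sum] at this

lemma sum_partition_delta {k : ℕ} {f : Nat.Partition k → ℤ} {c : ℤ}
    (h0 : ∀ l : k.Partition, l.parts = 0 → f l = c)
    (h1 : ∀ l : k.Partition, l.parts ≠ 0 → f l = 0) :
    (∑ l : k.Partition, f l) = if k = 0 then c else 0 := by
  by_cases hk : k = 0
  · subst hk
    rw [if_pos rfl, Fintype.sum_unique]
    exact h0 _ ((parts_eq_zero_iff _).mpr rfl)
  · rw [if_neg hk]
    apply Finset.sum_eq_zero
    intro l _
    exact h1 l (fun h => hk ((parts_eq_zero_iff l).mp h))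

lemma Ab_zero (n : ℕ) : Ab 0 n = if n = 0 then 1 else 0 := by
  unfold Ab
  have : ∀ l : n.Partition, (if (∀ j ∈ l.parts, j ≤ 0) then sg l.parts else 0)
      = if (∀ j ∈ l.parts, j ≤ 0) then 1 else 0 := by
    intro l
    by_cases h : ∀ j ∈ l.parts, j ≤ 0
    · have h0 : l.parts = 0 := by
        by_contra hne
        obtain ⟨j, hj⟩ := Multiset.exists_mem_of_ne_zero hne
        have := l.parts_pos hj
        have := h j hj
        omega
      rw [if_pos h, if_pos h, h0]
      rfl
    · rw [if_neg h, if_neg h]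
  rw [Finset.sum_congr rfl fun l _ => this l]
  apply sum_partition_delta
  · intro l h0
    rw [if_pos (by rw [h0]; simp)]
  · intro l hne
    rw [if_neg]
    intro h
    obtain ⟨j, hj⟩ := Multiset.exists_mem_of_ne_zero hne
    have := l.parts_pos hj
    have := h j hj
    omega

lemma db_zero (k : ℕ) : db 0 k = if k = 0 then 1 else 0 := by
  unfold db
  apply sum_partition_delta
  · intro l h0
    rw [if_pos (by rw [h0]; exact ⟨Multiset.nodup_zero, by simp⟩)]
  · intro l hne
    rw [if_neg]
    rintro ⟨_, h⟩
    obtain ⟨j, hj⟩ := Multiset.exists_mem_of_ne_zero hne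
    have := l.parts_pos hj
    have := h j hj
    omega

lemma u_zero (k : ℕ) : u 0 k = if k = 0 then 1 else 0 := by
  unfold u
  apply sum_partition_delta
  · intro l h0
    rw [if_pos (by rw [h0]; exact ⟨by simp, fun i h1 h2 => by omega⟩)]
  · intro l hne
    rw [if_neg]
    intro h
    obtain ⟨j, hj⟩ := Multiset.exists_mem_of_ne_zero hne
    have := l.parts_pos hj
    have := h.1 j hj
    omega

lemma v_zero (k : ℕ) : v 0 k = if k = 0 then 1 else 0 := by
  unfold v
  apply sum_partition_delta
  · intro l h0
    rw [if_pos (by rw [h0]; exact ⟨Multiset.nodup_zero, by simp⟩)]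
  · intro l hne
    rw [if_neg]
    intro h
    exact hne (Multiset.card_eq_zero.mp h.2)

lemma N_base (r k : ℕ) (h : k < r) : N r k = if k = 0 then 1 else 0 := by
  unfold N
  apply sum_partition_delta
  · intro l h0
    rw [if_pos (by rw [h0]; exact IF_zero r)]
  · intro l hne
    rw [if_neg]
    intro hIF
    have hr := IF_nonempty_mem hIF hne
    have := part_le l hr
    omega

lemma u_small (R k : ℕ) (hR : 1 ≤ R) (h : k < R) : u R k = 0 := by
  unfold u
  apply Finset.sum_eq_zero
  intro l _
  have : ¬ ES R l.parts := fun hES => by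
    have := part_le l (ES_mem hR hES)
    omega
  rw [if_neg this]

lemma v_small (R k : ℕ) (hR : 1 ≤ R) (h : k < R) : v R k = 0 := by
  unfold v
  apply Finset.sum_eq_zero
  intro l _
  have : ¬ (l.parts.Nodup ∧ Multiset.card l.parts = R) := by
    rintro ⟨_, hcard⟩
    have h1 := card_le_sum (fun x hx => l.parts_pos hx)
    rw [l.parts_sum, hcard] at h1
    omega
  rw [if_neg this]

lemma Ab_stab (R n : ℕ) (h : n ≤ R) : Ab R n = A n := by
  unfold Ab A
  apply Finset.sum_congr rfl
  intro l _
  have : ∀ j ∈ l.parts, j ≤ R := fun j hj => le_trans (part_le l hj) h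
  rw [if_pos this]

lemma db_stab (R k : ℕ) (h : k ≤ R) : db R k = d k := by
  unfold db d
  apply Finset.sum_congr rfl
  intro l _
  have hb : ∀ j ∈ l.parts, j ≤ R := fun j hj => le_trans (part_le l hj) h
  by_cases hn : l.parts.Nodup
  · rw [if_pos ⟨hn, hb⟩, if_pos hn]
  · rw [if_neg (fun hc => hn hc.1), if_neg hn]

lemma d_sum_v (k : ℕ) : d k = ∑ R ∈ Finset.range (k + 1), v R k := by
  unfold d v
  rw [Finset.sum_comm]
  apply Finset.sum_congr rfl
  intro l _
  by_cases hn : l.parts.Nodup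
  · have hcard : Multiset.card l.parts ∈ Finset.range (k + 1) := by
      rw [Finset.mem_range]
      have h1 := card_le_sum (fun x hx => l.parts_pos hx)
      rw [l.parts_sum] at h1
      omega
    rw [if_pos hn]
    rw [Finset.sum_congr rfl (fun R _ => by
      rw [show (if l.parts.Nodup ∧ Multiset.card l.parts = R then (1:ℤ) else 0)
        = if Multiset.card l.parts = R then 1 else 0 by
          by_cases h : Multiset.card l.parts = R
          · rw [if_pos ⟨hn, h⟩, if_pos h]
          · rw [if_neg (fun hc => h hc.2), if_neg h]])]
    rw [Finset.sum_ite_eq (Finset.range (k+1)) (Multiset.card l.parts) (fun _ => (1:ℤ))]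
    rw [if_pos hcard]
  · rw [if_neg hn]
    symm
    apply Finset.sum_eq_zero
    intro R _
    rw [if_neg (fun hc => hn hc.1)]

lemma sup_mem {s : Multiset ℕ} (h : s ≠ 0) : s.sup ∈ s := by
  induction s using Multiset.induction_on with
  | empty => exact absurd rfl h
  | cons a t ih =>
    rw [Multiset.sup_cons]
    by_cases ht : t = 0
    · subst ht; simp
    · rcases le_total a t.sup with hle | hle
      · rw [sup_eq_right.mpr hle]
        exact mem_cons_of_mem (ih ht)
      · rw [sup_eq_left.mpr hle]
        exact mem_cons_self _ _

lemma ES_unique {R R' : ℕ} {s : Multiset ℕ} (h : ES R s) (h' : ES R' s) : R = R' := by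
  rcases Nat.eq_zero_or_pos R with h0 | hpos
  · rcases Nat.eq_zero_or_pos R' with h0' | hpos'
    · omega
    · exfalso
      subst h0
      have hm := ES_mem hpos' h'
      have := h.1 R' hm
      omega
  · rcases Nat.eq_zero_or_pos R' with h0' | hpos'
    · exfalso
      subst h0'
      have hm := ES_mem hpos h
      have := h'.1 R hm
      omega
    · have h1 := h'.1 R (ES_mem hpos h)
      have h2 := h.1 R' (ES_mem hpos' h')
      omega

lemma ES_of_IF {s : Multiset ℕ} (h : IF 1 s) : ES s.sup s := by
  constructor
  · intro j hj
    exact Multiset.le_sup hj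
  · intro i h1 h2
    by_cases h0 : s = 0
    · subst h0
      simp at h2
      omega
    · exact h.2 i s.sup h1 h2 (sup_mem h0)

lemma IF_of_ES {R : ℕ} {s : Multiset ℕ} (hpos : ∀ j ∈ s, 1 ≤ j) (h : ES R s) : IF 1 s := by
  refine ⟨hpos, fun i j h1 hij hj => ?_⟩
  exact h.2 i h1 (le_trans hij (h.1 j hj))

lemma N1_sum_u (k : ℕ) : N 1 k = ∑ R ∈ Finset.range (k + 1), u R k := by
  unfold N u
  rw [Finset.sum_comm]
  apply Finset.sum_congr rfl
  intro l _
  by_cases hIF : IF 1 l.parts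
  · rw [if_pos hIF]
    have hES := ES_of_IF hIF
    have hmem : l.parts.sup ∈ Finset.range (k + 1) := by
      rw [Finset.mem_range]
      by_cases h0 : l.parts = 0
      · rw [h0]; simp
      · have := part_le l (sup_mem h0)
        omega
    rw [Finset.sum_eq_single_of_mem l.parts.sup hmem]
    · rw [if_pos hES]
    · intro R _ hne
      rw [if_neg (fun hc => hne (ES_unique hc hES))]
  · rw [if_neg hIF]
    symm
    apply Finset.sum_eq_zero
    intro R _
    rw [if_neg (fun hc => hIF (IF_of_ES (fun j hj => l.parts_pos hj) hc))]

lemma count_map_succ (s : Multiset ℕ) (b : ℕ) :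
    (s.map (· + 1)).count (b + 1) = s.count b :=
  Multiset.count_map_eq_count' _ s (fun x y h => by omega) b

lemma count_map_succ_one {s : Multiset ℕ} (hs : ∀ x ∈ s, 1 ≤ x) :
    (s.map (· + 1)).count 1 = 0 := by
  rw [Multiset.count_eq_zero]
  intro hmem
  obtain ⟨x, hx, hx1⟩ := Multiset.mem_map.mp hmem
  have := hs x hx
  omega

lemma count_map_succ_zero (s : Multiset ℕ) : (s.map (· + 1)).count 0 = 0 := by
  rw [Multiset.count_eq_zero]
  intro hmem
  obtain ⟨x, hx, hx1⟩ := Multiset.mem_map.mp hmem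
  omega

lemma count_map_pred {s : Multiset ℕ} (hs : ∀ x ∈ s, 2 ≤ x) (b : ℕ) (hb : 1 ≤ b) :
    (s.map (· - 1)).count b = s.count (b + 1) := by
  induction s using Multiset.induction_on with
  | empty => simp
  | cons a t ih =>
    have ha := hs a (mem_cons_self _ _)
    have iht := ih (fun x hx => hs x (mem_cons_of_mem hx))
    rw [Multiset.map_cons, Multiset.count_cons, Multiset.count_cons, iht]
    by_cases h : b + 1 = a
    · have h2 : b = a - 1 := by omega
      have h3 : a - 1 + 1 = a := by omega
      simp [h, h2, h3]
    · have h2 : ¬ b = a - 1 := by omega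
      simp [h, h2]

lemma map_pred_sum {s : Multiset ℕ} (hs : ∀ x ∈ s, 1 ≤ x) :
    (s.map (· - 1)).sum = s.sum - Multiset.card s := by
  induction s using Multiset.induction_on with
  | empty => simp
  | cons a t ih =>
    have ha := hs a (mem_cons_self _ _)
    have iht := ih (fun x hx => hs x (mem_cons_of_mem hx))
    have hct := card_le_sum (fun x hx => hs x (mem_cons_of_mem hx))
    rw [Multiset.map_cons, Multiset.sum_cons, Multiset.sum_cons, Multiset.card_cons, iht]
    omega

lemma count_one_eq (s : Multiset ℕ) :
    s.count 1 = Multiset.card (s.filter (fun x => x = 1)) := by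
  rw [Multiset.count, Multiset.countP_eq_card_filter]
  congr 1
  apply Multiset.filter_congr
  intro x _
  exact eq_comm

lemma card_filter_ne_one {s : Multiset ℕ} :
    Multiset.card (s.filter (· ≠ 1)) = Multiset.card s - s.count 1 := by
  have hsplit := Multiset.filter_add_not (fun x => x = 1) s
  have hcard : Multiset.card (s.filter (fun x => x = 1)) + Multiset.card (s.filter (fun x => ¬ x = 1)) = Multiset.card s := by
    rw [← Multiset.card_add, hsplit]
  have hcount := count_one_eq s
  have hne : (s.filter (fun x => ¬ x = 1)) = (s.filter (· ≠ 1)) := rfl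
  rw [hne] at hcard
  omega

/-- the decrement map on partitions: remove all parts equal to 1, subtract 1 from the rest -/
def decP {k : ℕ} (l : k.Partition) (R : ℕ) (hcard : Multiset.card l.parts = R)
    (hRk : R ≤ k) : (k - R).Partition :=
  ⟨(l.parts.filter (· ≠ 1)).map (· - 1),
   fun {i} hi => by
     obtain ⟨x, hx, hxi⟩ := Multiset.mem_map.mp hi
     have h1 := l.parts_pos (Multiset.mem_of_mem_filter hx)
     have h2 := Multiset.of_mem_filter hx
     omega,
   by
     have h2 : ∀ x ∈ l.parts.filter (· ≠ 1), 1 ≤ x := fun x hx =>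
       l.parts_pos (Multiset.mem_of_mem_filter hx)
     rw [map_pred_sum h2, card_filter_ne_one]
     have hsplit := Multiset.filter_add_not (fun x => x = 1) l.parts
     have hsum : (l.parts.filter (fun x => x = 1)).sum + (l.parts.filter (fun x => ¬ x = 1)).sum = k := by
       rw [← Multiset.sum_add, hsplit, l.parts_sum]
     have hone : (l.parts.filter (fun x => x = 1)).sum = l.parts.count 1 := by
       have h1 : ∀ x ∈ l.parts.filter (fun x => x = 1), x = 1 := fun x hx =>
         (Multiset.mem_filter.mp hx).2
       rw [Multiset.eq_replicate_card.mpr h1, Multiset.sum_replicate, smul_eq_mul, mul_one]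
       exact (count_one_eq _).symm
     have hc1 : l.parts.count 1 ≤ Multiset.card l.parts := Multiset.count_le_card _ _
     have hfil : (l.parts.filter (fun x => ¬ x = 1)) = (l.parts.filter (· ≠ 1)) := rfl
     rw [← hfil]
     omega⟩

/-- the increment map: add 1 to every part, then pad with parts equal to 1 -/
def incP {k R : ℕ} (hRk : R ≤ k) (m : (k - R).Partition) (hcard : Multiset.card m.parts ≤ R) :
    k.Partition :=
  ⟨Multiset.replicate (R - Multiset.card m.parts) 1 + m.parts.map (· + 1),
   fun {i} hi => by
     rcases Multiset.mem_add.mp hi with h | h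
     · have := Multiset.eq_of_mem_replicate h
       omega
     · obtain ⟨x, hx, hxi⟩ := Multiset.mem_map.mp h
       omega,
   by
     rw [Multiset.sum_add, Multiset.sum_replicate, smul_eq_mul, mul_one]
     have : (m.parts.map (· + 1)).sum = m.parts.sum + Multiset.card m.parts := by
       induction m.parts using Multiset.induction_on with
       | empty => simp
       | cons a t ih => simp [Multiset.sum_cons, ih]; ring
     rw [this, m.parts_sum]
     omega⟩




lemma decP_parts {k : ℕ} (l : k.Partition) (R : ℕ) (hcard : Multiset.card l.parts = R)
    (hRk : R ≤ k) : (decP l R hcard hRk).parts = (l.parts.filter (· ≠ 1)).map (· - 1) := rfl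

lemma incP_parts {k R : ℕ} (hRk : R ≤ k) (m : (k - R).Partition)
    (hcard : Multiset.card m.parts ≤ R) :
    (incP hRk m hcard).parts
      = Multiset.replicate (R - Multiset.card m.parts) 1 + m.parts.map (· + 1) := rfl

lemma decP_card {k : ℕ} (l : k.Partition) (R : ℕ) (hcard : Multiset.card l.parts = R)
    (hRk : R ≤ k) :
    Multiset.card (decP l R hcard hRk).parts = R - l.parts.count 1 := by
  rw [decP_parts, Multiset.card_map, card_filter_ne_one, hcard]

lemma decP_nodup {k : ℕ} (l : k.Partition) (R : ℕ) (hn : l.parts.Nodup)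
    (hcard : Multiset.card l.parts = R) (hRk : R ≤ k) :
    (decP l R hcard hRk).parts.Nodup := by
  rw [decP_parts]
  apply Multiset.Nodup.map_on
  · intro x hx y hy hxy
    have hx2 : 2 ≤ x := by
      have := l.parts_pos (Multiset.mem_of_mem_filter hx)
      have := (Multiset.mem_filter.mp hx).2
      omega
    have hy2 : 2 ≤ y := by
      have := l.parts_pos (Multiset.mem_of_mem_filter hy)
      have := (Multiset.mem_filter.mp hy).2
      omega
    omega
  · exact hn.filter _

lemma v_rec (R k : ℕ) (hR : 1 ≤ R) (hRk : R ≤ k) :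
    v R k = v R (k - R) + v (R - 1) (k - R) := by
  have hcomb : v R (k - R) + v (R - 1) (k - R)
      = ∑ m : (k - R).Partition, if m.parts.Nodup ∧
          (Multiset.card m.parts = R ∨ Multiset.card m.parts = R - 1) then (1:ℤ) else 0 := by
    unfold v
    rw [← Finset.sum_add_distrib]
    apply Finset.sum_congr rfl
    intro m _
    by_cases hn : m.parts.Nodup
    · by_cases h1 : Multiset.card m.parts = R
      · have h2 : ¬ Multiset.card m.parts = R - 1 := by omega
        have h3 : ¬ R = R - 1 := by omega
        simp [hn, h1, h2, h3]
      · by_cases h2 : Multiset.card m.parts = R - 1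
        · have h3 : ¬ R - 1 = R := by omega
          simp [hn, h1, h2, h3]
        · simp [hn, h1, h2]
    · simp [hn]
  rw [hcomb]
  unfold v
  rw [Finset.sum_ite, Finset.sum_const_zero, add_zero,
      Finset.sum_ite, Finset.sum_const_zero, add_zero]
  refine Finset.sum_bij'
    (i := fun l (hl : l ∈ Finset.univ.filter fun l : k.Partition =>
        l.parts.Nodup ∧ Multiset.card l.parts = R) =>
      decP l R (Finset.mem_filter.mp hl).2.2 hRk)
    (j := fun m (hm : m ∈ Finset.univ.filter fun m : (k - R).Partition =>
        m.parts.Nodup ∧ (Multiset.card m.parts = R ∨ Multiset.card m.parts = R - 1)) =>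
      incP hRk m (by
        rcases (Finset.mem_filter.mp hm).2.2 with h | h <;> omega))
    ?_ ?_ ?_ ?_ ?_
  · -- dec lands in target filter
    intro l hl
    obtain ⟨-, hn, hc⟩ := Finset.mem_filter.mp hl
    rw [Finset.mem_filter]
    refine ⟨Finset.mem_univ _, decP_nodup l R hn hc hRk, ?_⟩
    rw [decP_card]
    have hc1 : l.parts.count 1 ≤ 1 := Multiset.nodup_iff_count_le_one.mp hn 1
    rcases Nat.le_one_iff_eq_zero_or_eq_one.mp hc1 with h | h <;> rw [h] <;> omega
  · -- inc lands in source filter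
    intro m hm
    obtain ⟨-, hn, hc⟩ := Finset.mem_filter.mp hm
    rw [Finset.mem_filter]
    refine ⟨Finset.mem_univ _, ?_, ?_⟩
    · -- Nodup of incP
      rw [Multiset.nodup_iff_count_le_one]
      intro a
      rw [incP_parts, Multiset.count_add]
      have ht : R - Multiset.card m.parts ≤ 1 := by rcases hc with h | h <;> omega
      rcases a with _ | a
      · rw [count_map_succ_zero, Multiset.count_replicate]
        simp
      · rcases a with _ | b
        · rw [count_map_succ_one (fun x hx => m.parts_pos hx), Multiset.count_replicate,
            if_pos rfl, add_zero]
          exact ht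
        · rw [count_map_succ, Multiset.count_replicate]
          have h5 : ¬ ((1:ℕ) = b + 1 + 1) := by omega
          rw [if_neg h5, zero_add]
          exact Multiset.nodup_iff_count_le_one.mp hn _
    · -- card of incP = R
      rw [incP_parts, Multiset.card_add, Multiset.card_replicate, Multiset.card_map]
      rcases hc with h | h <;> omega
  · -- left inverse
    intro l hl
    obtain ⟨-, hn, hc⟩ := Finset.mem_filter.mp hl
    apply Nat.Partition.ext
    show (incP hRk (decP l R hc hRk) _).parts = l.parts
    rw [incP_parts]
    have hcq : Multiset.card (decP l R hc hRk).parts = R - l.parts.count 1 := decP_card l R hc hRk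
    have hc1 : l.parts.count 1 ≤ 1 := Multiset.nodup_iff_count_le_one.mp hn 1
    have hc1R : l.parts.count 1 ≤ R := by
      have := Multiset.count_le_card 1 l.parts
      omega
    have ht : R - Multiset.card (decP l R hc hRk).parts = l.parts.count 1 := by
      rw [hcq]; omega
    rw [ht]
    ext a
    rw [Multiset.count_add, Multiset.count_replicate]
    have hq2 : ∀ x ∈ (decP l R hc hRk).parts, 1 ≤ x := fun x hx =>
      (decP l R hc hRk).parts_pos hx
    rcases a with _ | a
    · rw [count_map_succ_zero]
      have : l.parts.count 0 = 0 := by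
        rw [Multiset.count_eq_zero]
        intro hmem
        exact absurd (l.parts_pos hmem) (by omega)
      simp [this]
    · rcases a with _ | b
      · rw [count_map_succ_one hq2]
        simp
      · rw [count_map_succ]
        have hne : ¬ ((1:ℕ) = b + 1 + 1) := by omega
        rw [if_neg hne, zero_add, decP_parts]
        have hfil2 : ∀ x ∈ l.parts.filter (· ≠ 1), 2 ≤ x := by
          intro x hx
          have := l.parts_pos (Multiset.mem_of_mem_filter hx)
          have := (Multiset.mem_filter.mp hx).2
          omega
        rw [count_map_pred hfil2 (b + 1) (by omega)]
        rw [Multiset.count_filter]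
        have : ((b + 1 + 1 : ℕ) ≠ 1) := by omega
        rw [if_pos this]
  · -- right inverse
    intro m hm
    apply Nat.Partition.ext
    show (decP (incP hRk m _) R _ hRk).parts = m.parts
    rw [decP_parts, incP_parts, Multiset.filter_add]
    have h1 : Multiset.filter (· ≠ 1) (Multiset.replicate (R - Multiset.card m.parts) 1) = 0 := by
      rw [Multiset.filter_eq_nil]
      intro a ha
      have := Multiset.eq_of_mem_replicate ha
      simp [this]
    have h2 : Multiset.filter (· ≠ 1) (m.parts.map (· + 1)) = m.parts.map (· + 1) := by
      rw [Multiset.filter_eq_self]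
      intro a ha
      obtain ⟨x, hx, hxa⟩ := Multiset.mem_map.mp ha
      have := m.parts_pos hx
      omega
    rw [h1, h2, zero_add, Multiset.map_map]
    have : ∀ x ∈ m.parts, ((· - 1) ∘ (· + 1)) x = x := fun x _ => by simp
    rw [Multiset.map_congr rfl this, Multiset.map_id']
  · intro l hl
    rfl



-- generic finite-sum helpers
lemma sum_shift (n r : ℕ) (hrn : r ≤ n) (H : ℕ → ℤ) :
    (∑ k ∈ Finset.range (n + 1), if r ≤ k then H k else 0)
      = ∑ k ∈ Finset.range (n - r + 1), H (k + r) := by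
  rw [Finset.sum_ite, Finset.sum_const_zero, add_zero]
  have hfil : (Finset.range (n + 1)).filter (fun k => r ≤ k) = Finset.Ico r (n + 1) := by
    ext x
    simp only [Finset.mem_filter, Finset.mem_range, Finset.mem_Ico]
    omega
  rw [hfil, Finset.sum_Ico_eq_sum_range]
  have : n + 1 - r = n - r + 1 := by omega
  rw [this]
  apply Finset.sum_congr rfl
  intro k _
  congr 1
  omega

lemma sum_truncate (n m : ℕ) (hm : m ≤ n) (H : ℕ → ℤ) :
    (∑ k ∈ Finset.range (n + 1), if k ≤ m then H k else 0)
      = ∑ k ∈ Finset.range (m + 1), H k := by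
  rw [Finset.sum_ite, Finset.sum_const_zero, add_zero]
  apply Finset.sum_congr
  · ext x
    simp only [Finset.mem_filter, Finset.mem_range]
    omega
  · intro x _; rfl

lemma sum_delta0 (n : ℕ) (H : ℕ → ℤ) :
    (∑ k ∈ Finset.range (n + 1), if k = 0 then H k else 0) = H 0 := by
  rw [Finset.sum_eq_single_of_mem 0 (by simp)]
  · simp
  · intro b _ hb
    rw [if_neg hb]

lemma sum_deltar (n r : ℕ) (hrn : r ≤ n) (H : ℕ → ℤ) :
    (∑ k ∈ Finset.range (n + 1), if k = r then H k else 0) = H r := by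
  rw [Finset.sum_eq_single_of_mem r (by simp; omega)]
  · simp
  · intro b _ hb
    rw [if_neg hb]

lemma uv (k : ℕ) : ∀ R, u R k = v R k := by
  induction k using Nat.strong_induction_on with
  | _ k ih =>
    intro R
    rcases Nat.eq_zero_or_pos R with h0 | hR
    · subst h0; rw [u_zero, v_zero]
    · rcases lt_or_ge k R with hlt | hle
      · rw [u_small R k hR hlt, v_small R k hR hlt]
      · rw [u_rec R k hR hle, v_rec R k hR hle,
          ih (k - R) (by omega) R, ih (k - R) (by omega) (R - 1)]

lemma N1_eq_d (k : ℕ) : N 1 k = d k := by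
  rw [N1_sum_u, d_sum_v]
  exact Finset.sum_congr rfl (fun R _ => uv k R)

/-- the convolution of A against N r -/
noncomputable def C (r n : ℕ) : ℤ := ∑ k ∈ Finset.range (n + 1), A (n - k) * N r k

lemma N_uniform (r : ℕ) (hr : 1 ≤ r) (k : ℕ) :
    N r k = (if k = 0 then 1 else 0)
      + (if r ≤ k then N r (k - r) + N (r + 1) (k - r) - (if k = r then 1 else 0) else 0) := by
  rcases lt_or_ge k r with hlt | hle
  · rw [N_base r k hlt]
    have h2 : ¬ r ≤ k := by omega
    rw [if_neg h2, add_zero]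
  · have h0 : ¬ k = 0 := by omega
    rw [N_rec r k hr hle, if_pos hle, if_neg h0, zero_add]

lemma C_rec (r n : ℕ) (hr : 1 ≤ r) (hrn : r ≤ n) :
    C r n = A n + C (r + 1) (n - r) - A (n - r) + C r (n - r) := by
  unfold C
  have point : ∀ k, A (n - k) * N r k
      = (if k = 0 then A n else 0)
        + (if r ≤ k then A (n - k) * (N r (k - r) + N (r + 1) (k - r)) else 0)
        - (if k = r then A (n - r) else 0) := by
    intro k
    rw [N_uniform r hr k]
    by_cases h0 : k = 0
    · subst h0
      have h1 : ¬ r ≤ 0 := by omega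
      have h2 : ¬ (0 : ℕ) = r := by omega
      simp [h1, h2]
    · by_cases hrk : r ≤ k
      · by_cases hkr : k = r
        · subst hkr
          simp only [h0, if_false, hrk, if_true, if_pos rfl]
          ring
        · simp only [h0, if_false, hrk, if_true, hkr]
          ring
      · have hkr : ¬ k = r := by omega
        simp only [h0, if_false, hrk, hkr]
        ring
  rw [Finset.sum_congr rfl (fun k _ => point k)]
  rw [Finset.sum_sub_distrib, Finset.sum_add_distrib]
  rw [sum_delta0 n (fun k => A n)]
  rw [sum_deltar n r hrn (fun k => A (n - r))]
  have hshift := sum_shift n r hrn (fun k => A (n - k) * (N r (k - r) + N (r + 1) (k - r)))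
  rw [hshift]
  have : ∀ k ∈ Finset.range (n - r + 1),
      A (n - (k + r)) * (N r (k + r - r) + N (r + 1) (k + r - r))
        = A ((n - r) - k) * N r k + A ((n - r) - k) * N (r + 1) k := by
    intro k _
    have e1 : n - (k + r) = (n - r) - k := by omega
    have e2 : k + r - r = k := by omega
    rw [e1, e2]
    ring
  rw [Finset.sum_congr rfl this, Finset.sum_add_distrib]
  ring

lemma F_eq_C (n : ℕ) : ∀ r, 1 ≤ r → F r n = C r n := by
  induction n using Nat.strong_induction_on with
  | _ n ih =>
    intro r hr
    rcases lt_or_ge n r with hlt | hle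
    · rw [F_base r n hlt]
      unfold C
      have point : ∀ k ∈ Finset.range (n + 1), A (n - k) * N r k
          = if k = 0 then A n else 0 := by
        intro k hk
        rw [Finset.mem_range] at hk
        rw [N_base r k (by omega)]
        by_cases h0 : k = 0
        · subst h0; simp
        · simp [h0]
      rw [Finset.sum_congr rfl point, sum_delta0 n (fun _ => A n)]
    · rw [F_rec r n hr hle, C_rec r n hr hle,
        ih (n - r) (by omega) (r + 1) (by omega), ih (n - r) (by omega) r hr]

/-- bounded convolution -/
noncomputable def Cb (R n : ℕ) : ℤ := ∑ k ∈ Finset.range (n + 1), Ab R (n - k) * db R k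

lemma Cb_zero (n : ℕ) : Cb 0 n = if n = 0 then 1 else 0 := by
  unfold Cb
  have point : ∀ k ∈ Finset.range (n + 1), Ab 0 (n - k) * db 0 k
      = if k = 0 then (if n = 0 then 1 else 0) else 0 := by
    intro k hk
    rw [Finset.mem_range] at hk
    rw [Ab_zero, db_zero]
    by_cases h0 : k = 0
    · subst h0
      by_cases hn : n = 0 <;> simp [hn]
    · simp [h0]
  rw [Finset.sum_congr rfl point, sum_delta0 n (fun _ => if n = 0 then 1 else 0)]

lemma db_uniform (R k : ℕ) (hR : 1 ≤ R) :
    db R k = db (R - 1) k + (if R ≤ k then db (R - 1) (k - R) else 0) := by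
  rcases lt_or_ge k R with hlt | hle
  · rw [if_neg (by omega), add_zero, db_stab R k (by omega), db_stab (R - 1) k (by omega)]
  · rw [db_rec R k hR hle, if_pos hle]

lemma Ab_uniform (R m : ℕ) (hR : 1 ≤ R) :
    Ab R m = Ab (R - 1) m - (if R ≤ m then Ab R (m - R) else 0) := by
  rcases lt_or_ge m R with hlt | hle
  · rw [if_neg (by omega), sub_zero, Ab_stab R m (by omega), Ab_stab (R - 1) m (by omega)]
  · rw [Ab_rec R m hR hle, if_pos hle]

lemma Cb_step (R n : ℕ) (hR : 1 ≤ R) : Cb R n = Cb (R - 1) n := by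
  unfold Cb
  have point : ∀ k, Ab R (n - k) * db R k
      = Ab R (n - k) * db (R - 1) k
        + (if R ≤ k then Ab R (n - k) * db (R - 1) (k - R) else 0) := by
    intro k
    rw [db_uniform R k hR]
    by_cases h : R ≤ k
    · rw [if_pos h, if_pos h]; ring
    · rw [if_neg h, if_neg h]; ring
  rw [Finset.sum_congr rfl (fun k _ => point k), Finset.sum_add_distrib]
  have point2 : ∀ k, Ab R (n - k) * db (R - 1) k
      = Ab (R - 1) (n - k) * db (R - 1) k
        - (if R ≤ n - k then Ab R ((n - k) - R) * db (R - 1) k else 0) := by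
    intro k
    rw [Ab_uniform R (n - k) hR]
    by_cases h : R ≤ n - k
    · rw [if_pos h, if_pos h]; ring
    · rw [if_neg h, if_neg h]; ring
  rw [Finset.sum_congr rfl (fun k _ => point2 k), Finset.sum_sub_distrib]
  have cancel : (∑ k ∈ Finset.range (n + 1), if R ≤ n - k then Ab R ((n - k) - R) * db (R - 1) k else 0)
      = ∑ k ∈ Finset.range (n + 1), if R ≤ k then Ab R (n - k) * db (R - 1) (k - R) else 0 := by
    rcases lt_or_ge n R with hlt | hle
    · have l0 : ∀ k ∈ Finset.range (n + 1),
          (if R ≤ n - k then Ab R ((n - k) - R) * db (R - 1) k else 0) = 0 := by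
        intro k hk
        rw [Finset.mem_range] at hk
        exact if_neg (by omega)
      have r0 : ∀ k ∈ Finset.range (n + 1),
          (if R ≤ k then Ab R (n - k) * db (R - 1) (k - R) else 0) = 0 := by
        intro k hk
        rw [Finset.mem_range] at hk
        exact if_neg (by omega)
      rw [Finset.sum_congr rfl l0, Finset.sum_congr rfl r0]
    · have lhs_eq : (∑ k ∈ Finset.range (n + 1), if R ≤ n - k then Ab R ((n - k) - R) * db (R - 1) k else 0)
          = ∑ k ∈ Finset.range (n - R + 1), Ab R ((n - R) - k) * db (R - 1) k := by
        have point3 : ∀ k ∈ Finset.range (n + 1),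
            (if R ≤ n - k then Ab R ((n - k) - R) * db (R - 1) k else 0)
              = (if k ≤ n - R then Ab R ((n - R) - k) * db (R - 1) k else 0) := by
          intro k hk
          rw [Finset.mem_range] at hk
          by_cases h : R ≤ n - k
          · rw [if_pos h, if_pos (by omega)]
            have : (n - k) - R = (n - R) - k := by omega
            rw [this]
          · rw [if_neg h, if_neg (by omega)]
        rw [Finset.sum_congr rfl point3]
        exact sum_truncate n (n - R) (by omega) _
      have rhs_eq : (∑ k ∈ Finset.range (n + 1), if R ≤ k then Ab R (n - k) * db (R - 1) (k - R) else 0)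
          = ∑ k ∈ Finset.range (n - R + 1), Ab R ((n - R) - k) * db (R - 1) k := by
        rw [sum_shift n R hle (fun k => Ab R (n - k) * db (R - 1) (k - R))]
        apply Finset.sum_congr rfl
        intro k _
        have e1 : n - (k + R) = (n - R) - k := by omega
        have e2 : k + R - R = k := by omega
        rw [e1, e2]
      rw [lhs_eq, rhs_eq]
  rw [cancel]
  ring

lemma Cb_eq_zero' (n : ℕ) : ∀ R, Cb R n = if n = 0 then 1 else 0 := by
  intro R
  induction R with
  | zero => exact Cb_zero n
  | succ R ih =>
    rw [Cb_step (R + 1) n (by omega)]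
    simpa using ih

lemma conv_Ad (n : ℕ) :
    (∑ k ∈ Finset.range (n + 1), A (n - k) * d k) = if n = 0 then 1 else 0 := by
  have point : ∀ k ∈ Finset.range (n + 1), A (n - k) * d k = Ab n (n - k) * db n k := by
    intro k hk
    rw [Finset.mem_range] at hk
    rw [Ab_stab n (n - k) (by omega), db_stab n k (by omega)]
  rw [Finset.sum_congr rfl point]
  exact Cb_eq_zero' n n

theorem F1_eq_delta (n : ℕ) : F 1 n = if n = 0 then 1 else 0 := by
  rw [F_eq_C n 1 le_rfl]
  unfold C
  rw [← conv_Ad n]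
  apply Finset.sum_congr rfl
  intro k _
  rw [N1_eq_d]


end Flushtest

namespace Flushtest

lemma P_one_iff {n : ℕ} (l : n.Partition) : P 1 l.parts ↔ ¬ l.Flushed := by
  have hset : {k : ℕ | 0 < k ∧ Even (l.parts.count k)}
      = {k : ℕ | 1 ≤ k ∧ Even (l.parts.count k)} := by
    ext k
    simp only [Set.mem_setOf_eq]
    constructor
    · rintro ⟨h1, h2⟩; exact ⟨by omega, h2⟩
    · rintro ⟨h1, h2⟩; exact ⟨by omega, h2⟩
  have hFl : l.Flushed ↔ Even (mm 1 l.parts) := by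
    unfold Nat.Partition.Flushed
    rw [hset]
    rfl
  have h1 : 1 ≤ mm 1 l.parts := (mm_spec 1 l.parts).1
  rw [hFl]
  unfold P
  have h2 : mm 1 l.parts = (mm 1 l.parts - 1) + 1 := by omega
  rw [h2, Nat.even_add_one, not_not]
  have h3 : mm 1 l.parts - 1 + 1 - 1 = mm 1 l.parts - 1 := by omega
  rw [h3]

end Flushtest

/-- Unflushed partitions of `n` with an odd number of parts are equinumerous
with unflushed partitions of `n` with an even number of parts. -/
theorem stmt19 (n : ℕ) (hn : 1 ≤ n) :
    Nat.card {l : n.Partition // ¬ l.Flushed ∧ Odd (Multiset.card l.parts)} =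
      Nat.card {l : n.Partition // ¬ l.Flushed ∧ Even (Multiset.card l.parts)} := by
  classical
  have hF := Flushtest.F1_eq_delta n
  rw [if_neg (by omega)] at hF
  have hsplit : Flushtest.F 1 n =
      ((Finset.univ.filter (fun l : n.Partition =>
        ¬ l.Flushed ∧ Even (Multiset.card l.parts))).card : ℤ)
      - ((Finset.univ.filter (fun l : n.Partition =>
        ¬ l.Flushed ∧ Odd (Multiset.card l.parts))).card : ℤ) := by
    rw [← Finset.sum_boole, ← Finset.sum_boole]
    unfold Flushtest.F
    rw [← Finset.sum_sub_distrib]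
    apply Finset.sum_congr rfl
    intro l _
    rw [if_congr (Flushtest.P_one_iff l) rfl rfl]
    by_cases hf : ¬ l.Flushed
    · rcases Nat.even_or_odd (Multiset.card l.parts) with he | ho
      · have hs : Flushtest.sg l.parts = 1 := by
          rw [Flushtest.sg, he.neg_one_pow]
        have hno : ¬ Odd (Multiset.card l.parts) := Nat.not_odd_iff_even.mpr he
        simp [hf, he, hno, hs]
      · have hs : Flushtest.sg l.parts = -1 := by
          rw [Flushtest.sg, ho.neg_one_pow]
        have hne : ¬ Even (Multiset.card l.parts) := Nat.not_even_iff_odd.mpr ho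
        simp [hf, ho, hne, hs]
    · simp [hf]
  rw [hsplit] at hF
  have hcard : (Finset.univ.filter (fun l : n.Partition =>
        ¬ l.Flushed ∧ Even (Multiset.card l.parts))).card
      = (Finset.univ.filter (fun l : n.Partition =>
        ¬ l.Flushed ∧ Odd (Multiset.card l.parts))).card := by omega
  rw [Nat.card_eq_fintype_card, Nat.card_eq_fintype_card,
    Fintype.card_subtype, Fintype.card_subtype, hcard]
end
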